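/- arXiv:2510.18031 — 10 statements merged into one kernel-verified Lean document; each statement's English description precedes it below -/
import Mathlib

section
/- Let n ≥ 1 and let Γ, Δ be n×n real matrices with nonnegative entries such that ΓΔ = ΔΓ and the sum Γ + Δ is irreducible. Then Γ and Δ have a common eigenvector with strictly positive entries: there exist a vector v ∈ ℝⁿ with v_k > 0 for all k and nonnegative real numbers λ, μ such that Γv = λv and Δv = μv. -/
/-!
Irreducibility of `Γ + Δ` yields a matrix `B = ∑ (Γ + Δ) ^ m` with positive entries that commutes
with `Γ` and `Δ`. Such a `B` has a positive eigenvector `v`: maximize the Collatz–Wielandt value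
`min_i (B x)_i / x_i` over the positive vectors `x = B y`, `y` in the standard simplex; if
`B v ≠ ρ v` at a maximizer, then `B v - ρ v ≥ 0` is nonzero, and applying `B` once more strictly
raises the value. Finally, for `C ≥ 0` commuting with `B`, let `λ ≥ 0` be the Collatz–Wielandt
value of `C` at `v`; then `C v - λ v` is a nonnegative eigenvector of `B` with a zero entry,
which forces it to vanish since `B` is positive.
-/

open Finset

theorem inv_sum_smul_mem_stdSimplex {ι R : Type*} [Fintype ι] [Field R] [LinearOrder R]
    [IsStrictOrderedRing R] {x : ι → R} (hx : 0 ≤ x) (hs : 0 < ∑ i, x i) :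
    (∑ i, x i)⁻¹ • x ∈ stdSimplex R ι :=
  ⟨fun i => smul_nonneg (inv_nonneg.mpr hs.le) (hx i), by
    simp only [Pi.smul_apply, smul_eq_mul, ← mul_sum, inv_mul_cancel₀ hs.ne']⟩

namespace Matrix

variable {ι R : Type*} [Fintype ι]

section Positivity

variable [Ring R] [LinearOrder R] [IsStrictOrderedRing R]

theorem mulVec_apply_pos {B : Matrix ι ι R} (hB : ∀ i j, 0 < B i j) {x : ι → R}
    (hx₀ : 0 ≤ x) (hx : x ≠ 0) (i : ι) : 0 < (B *ᵥ x) i := by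
  obtain ⟨k, hk⟩ := Function.ne_iff.mp hx
  exact sum_pos' (fun j _ => mul_nonneg (hB i j).le (hx₀ j))
    ⟨k, mem_univ k, mul_pos (hB i k) ((hx₀ k).lt_of_ne' hk)⟩

theorem IsIrreducible.exists_pos_commute [DecidableEq ι] {A : Matrix ι ι R}
    (hA : A.IsIrreducible) :
    ∃ B : Matrix ι ι R, (∀ i j, 0 < B i j) ∧ ∀ C, Commute A C → Commute B C := by
  have hA₀ := hA.nonneg
  rw [isIrreducible_iff_exists_pow_pos hA₀] at hA
  choose m hm using hA
  refine ⟨∑ p : ι × ι, A ^ m p.1 p.2, fun i j => ?_, fun C hC => ?_⟩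
  · rw [sum_apply]
    exact sum_pos' (fun p _ => pow_apply_nonneg hA₀ _ i j) ⟨(i, j), mem_univ _, (hm i j).2⟩
  · exact Commute.sum_left _ _ _ fun p _ => hC.pow_left _

end Positivity

section CollatzWielandt

variable [Field R] [LinearOrder R] [Nonempty ι]

/-- Only meaningful for `x` with positive entries: elsewhere the division by `0` returns `0`. -/
def collatzWielandt (A : Matrix ι ι R) (x : ι → R) : R :=
  univ.inf' univ_nonempty fun i => (A *ᵥ x) i / x i

variable {A : Matrix ι ι R} {x : ι → R}

theorem collatzWielandt_smul {c : R} (hc : c ≠ 0) :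
    A.collatzWielandt (c • x) = A.collatzWielandt x := by
  refine inf'_congr _ rfl fun i _ => ?_
  rw [mulVec_smul, Pi.smul_apply, Pi.smul_apply, smul_eq_mul, smul_eq_mul,
    mul_div_mul_left _ _ hc]

theorem exists_collatzWielandt_mul_eq (hx : ∀ i, 0 < x i) :
    ∃ j, A.collatzWielandt x * x j = (A *ᵥ x) j := by
  obtain ⟨j, -, hj⟩ := exists_mem_eq_inf' univ_nonempty fun i => (A *ᵥ x) i / x i
  exact ⟨j, by rw [collatzWielandt, hj, div_mul_cancel₀ _ (hx j).ne']⟩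

variable [IsStrictOrderedRing R]

theorem collatzWielandt_smul_le (hx : ∀ i, 0 < x i) : A.collatzWielandt x • x ≤ A *ᵥ x :=
  fun i => (le_div_iff₀ (hx i)).mp (inf'_le _ (mem_univ i))

theorem collatzWielandt_nonneg (hA : ∀ i j, 0 ≤ A i j) (hx : ∀ i, 0 < x i) :
    0 ≤ A.collatzWielandt x :=
  le_inf' _ _ fun i _ =>
    div_nonneg (sum_nonneg fun j _ => mul_nonneg (hA i j) (hx j).le) (hx i).le

theorem collatzWielandt_lt_mulVec {B : Matrix ι ι R} (hB : ∀ i j, 0 < B i j)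
    (hx : ∀ i, 0 < x i) (hne : B *ᵥ x ≠ B.collatzWielandt x • x) :
    B.collatzWielandt x < B.collatzWielandt (B *ᵥ x) := by
  set ρ := B.collatzWielandt x
  set u := B *ᵥ x - ρ • x with hu
  have hu₀ : 0 ≤ u := sub_nonneg.mpr (collatzWielandt_smul_le hx)
  have hBx : ∀ i, 0 < (B *ᵥ x) i :=
    mulVec_apply_pos hB (fun i => (hx i).le) fun h => (hx _).ne' (congrFun h Classical.ofNonempty)
  have hBBx : B *ᵥ (B *ᵥ x) = ρ • B *ᵥ x + B *ᵥ u := by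
    rw [hu, mulVec_sub, mulVec_smul, add_sub_cancel]
  refine (lt_inf'_iff _).mpr fun i _ => (lt_div_iff₀ (hBx i)).mpr ?_
  rw [hBBx, Pi.add_apply, Pi.smul_apply, smul_eq_mul, mul_comm]
  exact lt_add_of_pos_right _ (mulVec_apply_pos hB hu₀ (sub_ne_zero.mpr hne) i)

theorem mulVec_eq_collatzWielandt_smul_of_commute {B C : Matrix ι ι R} (hB : ∀ i j, 0 < B i j)
    {ρ : R} (hx : ∀ i, 0 < x i) (hBx : B *ᵥ x = ρ • x) (hBC : Commute B C) :
    C *ᵥ x = C.collatzWielandt x • x := by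
  set u := C *ᵥ x - C.collatzWielandt x • x with hu
  obtain ⟨j, hj⟩ := exists_collatzWielandt_mul_eq (A := C) hx
  have huj : u j = 0 := by simp [hu, hj]
  have hBu : B *ᵥ u = ρ • u := by
    rw [hu, mulVec_sub, mulVec_mulVec, hBC.eq, ← mulVec_mulVec, mulVec_smul, hBx, mulVec_smul,
      smul_sub, smul_comm]
  by_contra hne
  have hBuj := mulVec_apply_pos hB (sub_nonneg.mpr (collatzWielandt_smul_le hx))
    (sub_ne_zero.mpr hne) j
  rw [hBu, Pi.smul_apply, huj, smul_zero] at hBuj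
  exact hBuj.false

end CollatzWielandt

theorem exists_pos_eigenvector_of_pos [Nonempty ι] {B : Matrix ι ι ℝ} (hB : ∀ i j, 0 < B i j) :
    ∃ v : ι → ℝ, (∀ i, 0 < v i) ∧ ∃ ρ : ℝ, B *ᵥ v = ρ • v := by
  classical
  have hpos : ∀ y ∈ stdSimplex ℝ ι, ∀ i, 0 < (B *ᵥ y) i := fun y hy =>
    mulVec_apply_pos hB hy.1 fun h => by subst h; simp [stdSimplex] at hy
  have hcont : ContinuousOn (fun y => B.collatzWielandt (B *ᵥ y)) (stdSimplex ℝ ι) :=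
    ContinuousOn.finset_inf'_apply _ fun i _ =>
      ContinuousOn.div (by fun_prop) (by fun_prop) fun y hy => (hpos y hy i).ne'
  obtain ⟨y, hy, hmax⟩ := (isCompact_stdSimplex ℝ ι).exists_isMaxOn
    ⟨_, single_mem_stdSimplex ℝ Classical.ofNonempty⟩ hcont
  set v := B *ᵥ y
  have hv : ∀ i, 0 < v i := hpos y hy
  refine ⟨v, hv, B.collatzWielandt v, by_contra fun hne => ?_⟩
  have hsum : 0 < ∑ i, v i := sum_pos (fun i _ => hv i) univ_nonempty
  have hle : B.collatzWielandt (B *ᵥ ((∑ i, v i)⁻¹ • v)) ≤ B.collatzWielandt v :=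
    hmax (inv_sum_smul_mem_stdSimplex (fun i => (hv i).le) hsum)
  rw [mulVec_smul, collatzWielandt_smul (inv_ne_zero hsum.ne')] at hle
  exact hle.not_gt (collatzWielandt_lt_mulVec hB hv hne)

end Matrix

open Matrix in
/-- If `Γ, Δ` are `n × n` nonnegative real matrices that commute and whose
sum is irreducible, then they have a common eigenvector with strictly positive entries,
with nonnegative eigenvalues. Irreducibility is phrased as: for all `i j` there is
`m ≥ 1` with `((Γ + Δ)^m) i j > 0`. -/
theorem commuting_nonneg_irreducible_common_positive_eigenvector
    (n : ℕ) (hn : 1 ≤ n) (Γ Δ : Matrix (Fin n) (Fin n) ℝ)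
    (hΓ0 : ∀ i j, 0 ≤ Γ i j) (hΔ0 : ∀ i j, 0 ≤ Δ i j)
    (hcomm : Γ * Δ = Δ * Γ)
    (hirr : ∀ i j, ∃ m : ℕ, 1 ≤ m ∧ 0 < ((Γ + Δ) ^ m) i j) :
    ∃ (v : Fin n → ℝ) (lam mu : ℝ),
      (∀ k, 0 < v k) ∧ 0 ≤ lam ∧ 0 ≤ mu ∧
      Γ.mulVec v = lam • v ∧ Δ.mulVec v = mu • v := by
  have : Nonempty (Fin n) := ⟨⟨0, hn⟩⟩
  have hΓΔ : Commute Γ Δ := hcomm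
  have hA : (Γ + Δ).IsIrreducible :=
    (isIrreducible_iff_exists_pow_pos fun i j => add_nonneg (hΓ0 i j) (hΔ0 i j)).mpr hirr
  obtain ⟨B, hB, hBcomm⟩ := hA.exists_pos_commute
  obtain ⟨v, hv, ρ, hBv⟩ := exists_pos_eigenvector_of_pos hB
  have hBΓ : Commute B Γ := hBcomm Γ ((Commute.refl Γ).add_left hΓΔ.symm)
  have hBΔ : Commute B Δ := hBcomm Δ (hΓΔ.add_left (Commute.refl Δ))
  exact ⟨v, Γ.collatzWielandt v, Δ.collatzWielandt v, hv,
    collatzWielandt_nonneg hΓ0 hv, collatzWielandt_nonneg hΔ0 hv,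
    mulVec_eq_collatzWielandt_smul_of_commute hB hv hBv hBΓ,
    mulVec_eq_collatzWielandt_smul_of_commute hB hv hBv hBΔ⟩
end

section
/- Let Γ, Δ be n×n real matrices with nonnegative entries and let ε : {1,…,n} → {0,1} be a coloring with Γ_{ij} = Δ_{ij} = 0 whenever ε_i = ε_j. Let ∼ be an equivalence relation on {1,…,n} along which both Γ and Δ are foldable and such that ε is constant on each equivalence class; let Γ′, Δ′ be the folded matrices and ε′ the induced coloring on equivalence classes. Let N ≥ 1 be an integer. If every tropical T-system for (Γ, Δ, ε) with any initial labeling is periodic with period N, then every tropical T-system for (Γ′, Δ′, ε′) with any initial labeling is periodic with period N. -/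
/-- A tropical T-system for bipartite data `(Γ, Δ, ε)` with initial labeling `l`:
a family `u : V → ℤ → ℝ` with `u k 0 = l k` for white `k` (`ε k = 0`),
`u k 1 = l k` for black `k` (`ε k = 1`), and the tropical exchange relation
at every `k` and every time `t` with `t + ε k` odd. -/
def IsTropicalTSystem {V : Type*} [Fintype V] (Γ Δ : Matrix V V ℝ) (ε : V → Fin 2)
    (l : V → ℝ) (u : V → ℤ → ℝ) : Prop :=
  (∀ k, ε k = 0 → u k 0 = l k) ∧
  (∀ k, ε k = 1 → u k 1 = l k) ∧
  (∀ (k : V) (t : ℤ), Odd (t + ((ε k : ℕ) : ℤ)) →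
    u k (t + 1) + u k (t - 1) = max (∑ i, Γ i k * u i t) (∑ j, Δ j k * u j t))

/-- A tropical T-system is periodic with period `N` if `u k (t + 2N) = u k t`
for all `k` and all `t` with `t + ε k` even. -/
def IsPeriodicTropicalTSystem {V : Type*} (ε : V → Fin 2) (N : ℕ) (u : V → ℤ → ℝ) : Prop :=
  ∀ (k : V) (t : ℤ), Even (t + ((ε k : ℕ) : ℤ)) → u k (t + 2 * N) = u k t

/-!
Pulling a tropical T-system back along the quotient map `π` gives a tropical T-system
on the unfolded data: foldability is exactly what makes the weighted sums over `V` of a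
function constant on the fibres of `π` equal the weighted sums over the classes. The
pulled-back system is periodic by hypothesis, and since `π` is surjective, so is the
original one.
-/

open Finset

variable {V W : Type*}

section Fintype

variable [Fintype V] [Fintype W] [DecidableEq W]

def Matrix.IsFolding (π : V → W) (M : Matrix V V ℝ) (M' : Matrix W W ℝ) : Prop :=
  ∀ (I : W) (j : V), M' I (π j) = ∑ i ∈ univ.filter (fun i => π i = I), M i j

theorem Matrix.IsFolding.sum_mul_comp {π : V → W} {M : Matrix V V ℝ} {M' : Matrix W W ℝ}
    (h : M.IsFolding π M') (f : W → ℝ) (j : V) :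
    ∑ i, M i j * f (π i) = ∑ I, M' I (π j) * f I := by
  rw [← sum_fiberwise_of_maps_to (g := π) (fun i _ => mem_univ _)]
  refine sum_congr rfl fun I _ => ?_
  rw [h I j, sum_mul]
  refine sum_congr rfl fun i hi => ?_
  rw [(mem_filter.mp hi).2]

theorem IsTropicalTSystem.comp {π : V → W} {Γ Δ : Matrix V V ℝ} {Γ' Δ' : Matrix W W ℝ}
    {ε : V → Fin 2} {ε' : W → Fin 2} {l' : W → ℝ} {u' : W → ℤ → ℝ}
    (hΓ : Γ.IsFolding π Γ') (hΔ : Δ.IsFolding π Δ') (hε : ∀ i, ε' (π i) = ε i)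
    (hu' : IsTropicalTSystem Γ' Δ' ε' l' u') :
    IsTropicalTSystem Γ Δ ε (fun i => l' (π i)) (fun i t => u' (π i) t) := by
  obtain ⟨hwhite, hblack, hexchange⟩ := hu'
  refine ⟨fun i hi => hwhite (π i) (by rw [hε, hi]), fun i hi => hblack (π i) (by rw [hε, hi]),
    fun j t ht => ?_⟩
  rw [hΓ.sum_mul_comp (u' · t), hΔ.sum_mul_comp (u' · t)]
  exact hexchange (π j) t (by rwa [hε])

end Fintype

theorem IsPeriodicTropicalTSystem.of_comp {π : V → W} (hπ : Function.Surjective π)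
    {ε : V → Fin 2} {ε' : W → Fin 2} (hε : ∀ i, ε' (π i) = ε i) {N : ℕ} {u' : W → ℤ → ℝ}
    (h : IsPeriodicTropicalTSystem ε N (fun i t => u' (π i) t)) :
    IsPeriodicTropicalTSystem ε' N u' := by
  intro k t ht
  obtain ⟨i, rfl⟩ := hπ k
  exact h i t (by rwa [← hε])

theorem folding_preserves_tropical_periodicity_general
    (n m : ℕ) (π : Fin n → Fin m) (hπ : Function.Surjective π)
    (Γ Δ : Matrix (Fin n) (Fin n) ℝ)
    (ε : Fin n → Fin 2)
    (Γ' Δ' : Matrix (Fin m) (Fin m) ℝ)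
    (hΓ' : ∀ (I : Fin m) (j : Fin n),
      Γ' I (π j) = ∑ i ∈ Finset.univ.filter (fun i => π i = I), Γ i j)
    (hΔ' : ∀ (I : Fin m) (j : Fin n),
      Δ' I (π j) = ∑ i ∈ Finset.univ.filter (fun i => π i = I), Δ i j)
    (ε' : Fin m → Fin 2) (hε' : ∀ i, ε' (π i) = ε i)
    (N : ℕ)
    (hper : ∀ (l : Fin n → ℝ) (u : Fin n → ℤ → ℝ),
      IsTropicalTSystem Γ Δ ε l u → IsPeriodicTropicalTSystem ε N u) :
    ∀ (l' : Fin m → ℝ) (u' : Fin m → ℤ → ℝ),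
      IsTropicalTSystem Γ' Δ' ε' l' u' → IsPeriodicTropicalTSystem ε' N u' :=
  fun _ _ hu' => (hper _ _ (hu'.comp hΓ' hΔ' hε')).of_comp hπ hε'

/-- Periodicity of tropical T-systems is inherited under folding.
The equivalence relation on `{1,…,n}` is encoded by a surjection `π : Fin n → Fin m`
onto the set of equivalence classes (the classes being its fibers); `Γ', Δ'` are the
folded matrices and `ε'` the induced coloring. If every tropical T-system for
`(Γ, Δ, ε)` with any initial labeling is periodic with period `N`, then the same holds
for `(Γ', Δ', ε')`. -/
theorem folding_preserves_tropical_periodicity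
    (n m : ℕ) (π : Fin n → Fin m) (hπ : Function.Surjective π)
    (Γ Δ : Matrix (Fin n) (Fin n) ℝ)
    (hΓ0 : ∀ i j, 0 ≤ Γ i j) (hΔ0 : ∀ i j, 0 ≤ Δ i j)
    (ε : Fin n → Fin 2)
    (hbip : ∀ i j, ε i = ε j → Γ i j = 0 ∧ Δ i j = 0)
    (hεconst : ∀ i j, π i = π j → ε i = ε j)
    (Γ' Δ' : Matrix (Fin m) (Fin m) ℝ)
    (hΓ' : ∀ (I : Fin m) (j : Fin n),
      Γ' I (π j) = ∑ i ∈ Finset.univ.filter (fun i => π i = I), Γ i j)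
    (hΔ' : ∀ (I : Fin m) (j : Fin n),
      Δ' I (π j) = ∑ i ∈ Finset.univ.filter (fun i => π i = I), Δ i j)
    (ε' : Fin m → Fin 2) (hε' : ∀ i, ε' (π i) = ε i)
    (N : ℕ) (hN : 1 ≤ N)
    (hper : ∀ (l : Fin n → ℝ) (u : Fin n → ℤ → ℝ),
      IsTropicalTSystem Γ Δ ε l u → IsPeriodicTropicalTSystem ε N u) :
    ∀ (l' : Fin m → ℝ) (u' : Fin m → ℤ → ℝ),
      IsTropicalTSystem Γ' Δ' ε' l' u' → IsPeriodicTropicalTSystem ε' N u' :=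
  folding_preserves_tropical_periodicity_general n m π hπ Γ Δ ε Γ' Δ' hΓ' hΔ' ε' hε' N hper
end

section
/- Let Γ, Δ be n×n real matrices with nonnegative entries, let ε : {1,…,n} → {0,1} be a coloring with Γ_{ij} = Δ_{ij} = 0 whenever ε_i = ε_j, and suppose there exists c ∈ ℝⁿ with all entries positive such that c_i Γ_{ij} = c_j Γ_{ji} and c_i Δ_{ij} = c_j Δ_{ji} for all i, j. Let N ≥ 1 be an integer. Then every tropical T-system for (Γ, Δ, ε) with any initial labeling is periodic with period N if and only if every tropical T-system for (Γᵀ, Δᵀ, ε) with any initial labeling is periodic with period N. -/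
/-!
If `c` symmetrizes `Γ` and `Δ`, i.e. `diag(c) Γ` and `diag(c) Δ` are symmetric, then rescaling
every coordinate `u_k` of a tropical T-system for `(Γᵀ, Δᵀ)` by `c_k > 0` gives a tropical
T-system for `(Γ, Δ)`: the tropical recursion is positively homogeneous in each coordinate.
Since rescaling by positive constants neither creates nor destroys periodicity, periodicity of all
systems for `(Γ, Δ)` implies it for `(Γᵀ, Δᵀ)`. The converse is the same statement for the
transposed data, which is symmetrized by `c⁻¹`.
-/

section

open scoped Matrix

variable {V : Type*}

lemma sum_mul_symmetrizer_eq [Fintype V] {M : Matrix V V ℝ} {c : V → ℝ}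
    (hcM : ∀ i j, c i * M i j = c j * M j i) (u : V → ℝ) (k : V) :
    ∑ i, M i k * (c i * u i) = c k * ∑ i, Mᵀ i k * u i := by
  rw [Finset.mul_sum]
  refine Finset.sum_congr rfl fun i _ => ?_
  rw [Matrix.transpose_apply]
  linear_combination u i * hcM i k

lemma inv_symmetrizer_transpose {M : Matrix V V ℝ} {c : V → ℝ} (hc : ∀ i, c i ≠ 0)
    (hcM : ∀ i j, c i * M i j = c j * M j i) (i j : V) :
    (c i)⁻¹ * Mᵀ i j = (c j)⁻¹ * Mᵀ j i := by
  have hci := hc i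
  have hcj := hc j
  rw [Matrix.transpose_apply, Matrix.transpose_apply]
  field_simp
  linear_combination hcM j i

lemma IsTropicalTSystem.scale_of_transpose [Fintype V] {Γ Δ : Matrix V V ℝ} {ε : V → Fin 2}
    {c : V → ℝ} (hc : ∀ i, 0 < c i)
    (hcΓ : ∀ i j, c i * Γ i j = c j * Γ j i) (hcΔ : ∀ i j, c i * Δ i j = c j * Δ j i)
    {l : V → ℝ} {u : V → ℤ → ℝ} (hu : IsTropicalTSystem Γᵀ Δᵀ ε l u) :
    IsTropicalTSystem Γ Δ ε (fun k => c k * l k) (fun k t => c k * u k t) := by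
  obtain ⟨hu0, hu1, hrec⟩ := hu
  refine ⟨fun k hk => congrArg (c k * ·) (hu0 k hk), fun k hk => congrArg (c k * ·) (hu1 k hk),
    fun k t ht => ?_⟩
  simp only [sum_mul_symmetrizer_eq hcΓ, sum_mul_symmetrizer_eq hcΔ]
  rw [← mul_add, hrec k t ht, mul_max_of_nonneg _ _ (hc k).le]

lemma IsPeriodicTropicalTSystem.of_scale {ε : V → Fin 2} {N : ℕ} {c : V → ℝ}
    (hc : ∀ i, c i ≠ 0) {u : V → ℤ → ℝ}
    (hu : IsPeriodicTropicalTSystem ε N (fun k t => c k * u k t)) :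
    IsPeriodicTropicalTSystem ε N u :=
  fun k t ht => mul_left_cancel₀ (hc k) (hu k t ht)

theorem forall_isPeriodic_transpose_of_symmetrizer [Fintype V] {Γ Δ : Matrix V V ℝ}
    {ε : V → Fin 2} {c : V → ℝ} (hc : ∀ i, 0 < c i)
    (hcΓ : ∀ i j, c i * Γ i j = c j * Γ j i) (hcΔ : ∀ i j, c i * Δ i j = c j * Δ j i) {N : ℕ}
    (h : ∀ l u, IsTropicalTSystem Γ Δ ε l u → IsPeriodicTropicalTSystem ε N u)
    (l : V → ℝ) (u : V → ℤ → ℝ) (hu : IsTropicalTSystem Γᵀ Δᵀ ε l u) :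
    IsPeriodicTropicalTSystem ε N u :=
  .of_scale (fun i => (hc i).ne') (h _ _ (hu.scale_of_transpose hc hcΓ hcΔ))

end

theorem transpose_tropical_periodicity_iff_general
    (n : ℕ) (Γ Δ : Matrix (Fin n) (Fin n) ℝ)
    (ε : Fin n → Fin 2)
    (c : Fin n → ℝ) (hc : ∀ i, 0 < c i)
    (hcΓ : ∀ i j, c i * Γ i j = c j * Γ j i)
    (hcΔ : ∀ i j, c i * Δ i j = c j * Δ j i)
    (N : ℕ) :
    (∀ (l : Fin n → ℝ) (u : Fin n → ℤ → ℝ),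
      IsTropicalTSystem Γ Δ ε l u → IsPeriodicTropicalTSystem ε N u) ↔
    (∀ (l : Fin n → ℝ) (u : Fin n → ℤ → ℝ),
      IsTropicalTSystem Γ.transpose Δ.transpose ε l u → IsPeriodicTropicalTSystem ε N u) := by
  refine ⟨forall_isPeriodic_transpose_of_symmetrizer hc hcΓ hcΔ, fun h => ?_⟩
  have hc_inv : ∀ i, 0 < (c i)⁻¹ := fun i => inv_pos.mpr (hc i)
  have h_transpose := forall_isPeriodic_transpose_of_symmetrizer hc_inv
    (inv_symmetrizer_transpose (fun i => (hc i).ne') hcΓ)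
    (inv_symmetrizer_transpose (fun i => (hc i).ne') hcΔ) h
  simpa only [Matrix.transpose_transpose] using h_transpose

/-- For skew-symmetrizable bipartite data (symmetrizer `c`), all tropical
T-systems for `(Γ, Δ, ε)` are periodic with period `N` iff all tropical T-systems for
the transposed data `(Γᵀ, Δᵀ, ε)` are periodic with period `N`. -/
theorem transpose_tropical_periodicity_iff
    (n : ℕ) (Γ Δ : Matrix (Fin n) (Fin n) ℝ)
    (hΓ0 : ∀ i j, 0 ≤ Γ i j) (hΔ0 : ∀ i j, 0 ≤ Δ i j)
    (ε : Fin n → Fin 2)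
    (hbip : ∀ i j, ε i = ε j → Γ i j = 0 ∧ Δ i j = 0)
    (c : Fin n → ℝ) (hc : ∀ i, 0 < c i)
    (hcΓ : ∀ i j, c i * Γ i j = c j * Γ j i)
    (hcΔ : ∀ i j, c i * Δ i j = c j * Δ j i)
    (N : ℕ) (hN : 1 ≤ N) :
    (∀ (l : Fin n → ℝ) (u : Fin n → ℤ → ℝ),
      IsTropicalTSystem Γ Δ ε l u → IsPeriodicTropicalTSystem ε N u) ↔
    (∀ (l : Fin n → ℝ) (u : Fin n → ℤ → ℝ),
      IsTropicalTSystem Γ.transpose Δ.transpose ε l u → IsPeriodicTropicalTSystem ε N u) :=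
  transpose_tropical_periodicity_iff_general n Γ Δ ε c hc hcΓ hcΔ N
end

section
/- Let Γ, Δ be n×n matrices with nonnegative integer entries. Then (Γ, Δ) admits a fixed point labeling if and only if (Γ, Δ) admits a strictly subadditive labeling. -/
/-!
Taking logarithms turns a fixed point labeling `ρ` into a strictly subadditive labeling
`log ρ`: since both monomials are positive, each is strictly smaller than their sum `ρ k ^ 2`.

Conversely, rescale a strictly subadditive labeling `ν` until every gap
`2 ν k - ∑ i, Γ i k * ν i` (and likewise for `Δ`) is at least `log 2`. Then `u = exp ν`
satisfies `∏ i, u i ^ Γ i k + ∏ j, u j ^ Δ j k ≤ u k ^ 2`, so the monotone map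
`x ↦ √(∏ i, x i ^ Γ i k + ∏ j, x j ^ Δ j k)` sends the order interval `[1, u]` into itself, and
Knaster–Tarski yields a fixed point there. Its entries exceed `1` because `ρ k ^ 2 ≥ 1 + 1`.
-/

open Set Filter Real

theorem exists_fixedPoint_mem_Icc {α : Type*} [ConditionallyCompleteLattice α] {f : α → α}
    {a b : α} (hab : a ≤ b) (hf : MonotoneOn f (Icc a b)) (ha : a ≤ f a) (hb : f b ≤ b) :
    ∃ x ∈ Icc a b, f x = x := by
  have : Fact (a ≤ b) := ⟨hab⟩
  have hmaps : MapsTo f (Icc a b) (Icc a b) := fun x hx =>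
    ⟨ha.trans (hf (left_mem_Icc.2 hab) hx hx.1), (hf hx (right_mem_Icc.2 hab) hx.2).trans hb⟩
  let g : Icc a b →o Icc a b := ⟨hmaps.restrict f _ _, fun x y hxy => hf x.2 y.2 hxy⟩
  exact ⟨_, (OrderHom.lfp g).2, congrArg Subtype.val g.map_lfp⟩

variable {ι : Type*} [Fintype ι]

def colMonomial (M : Matrix ι ι ℕ) (x : ι → ℝ) (k : ι) : ℝ :=
  ∏ i, x i ^ M i k

def IsFixedPointLabeling (Γ Δ : Matrix ι ι ℕ) (ρ : ι → ℝ) : Prop :=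
  (∀ k, 1 < ρ k) ∧ ∀ k, ρ k ^ 2 = colMonomial Γ ρ k + colMonomial Δ ρ k

def IsStrictlySubadditiveLabeling (Γ Δ : Matrix ι ι ℕ) (ν : ι → ℝ) : Prop :=
  (∀ k, 0 < ν k) ∧
    ∀ k, (∑ i, (Γ i k : ℝ) * ν i < 2 * ν k) ∧ (∑ j, (Δ j k : ℝ) * ν j < 2 * ν k)

section colMonomial

variable (M : Matrix ι ι ℕ) {x y : ι → ℝ} (k : ι)

theorem colMonomial_mono (hx : 0 ≤ x) (hxy : x ≤ y) : colMonomial M x k ≤ colMonomial M y k :=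
  Finset.prod_le_prod (fun i _ => pow_nonneg (hx i) _)
    fun i _ => pow_le_pow_left₀ (hx i) (hxy i) _

theorem one_le_colMonomial (hx : 1 ≤ x) : 1 ≤ colMonomial M x k :=
  Finset.one_le_prod fun i _ => one_le_pow₀ (hx i)

@[simp]
theorem colMonomial_one : colMonomial M 1 k = 1 := by
  simp [colMonomial]

theorem colMonomial_exp (ν : ι → ℝ) :
    colMonomial M (fun i => exp (ν i)) k = exp (∑ i, (M i k : ℝ) * ν i) := by
  simp only [colMonomial, ← exp_nat_mul, ← exp_sum]

theorem log_colMonomial (hx : ∀ i, 0 < x i) :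
    log (colMonomial M x k) = ∑ i, (M i k : ℝ) * log (x i) := by
  conv_lhs => rw [show x = fun i => exp (log (x i)) from funext fun i => (exp_log (hx i)).symm]
  rw [colMonomial_exp, log_exp]

theorem colMonomial_exp_le_half_sq {ν : ι → ℝ} (hgap : log 2 ≤ 2 * ν k - ∑ i, (M i k : ℝ) * ν i) :
    colMonomial M (fun i => exp (ν i)) k ≤ exp (ν k) ^ 2 / 2 := by
  calc colMonomial M (fun i => exp (ν i)) k = exp (∑ i, (M i k : ℝ) * ν i) := colMonomial_exp M k ν
    _ ≤ exp (2 * ν k - log 2) := exp_le_exp.2 (by linarith)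
    _ = exp (ν k) ^ 2 / 2 := by rw [exp_sub, exp_log two_pos, ← exp_nat_mul]; norm_num

end colMonomial

variable {Γ Δ : Matrix ι ι ℕ}

theorem IsFixedPointLabeling.isStrictlySubadditiveLabeling_log {ρ : ι → ℝ}
    (h : IsFixedPointLabeling Γ Δ ρ) :
    IsStrictlySubadditiveLabeling Γ Δ fun k => log (ρ k) := by
  obtain ⟨hρ, hfix⟩ := h
  have hpos i : 0 < ρ i := one_pos.trans (hρ i)
  have hge : 1 ≤ ρ := fun i => (hρ i).le
  have hlt {M M' : Matrix ι ι ℕ} {k : ι}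
      (hsum : ρ k ^ 2 = colMonomial M ρ k + colMonomial M' ρ k) :
      ∑ i, (M i k : ℝ) * log (ρ i) < 2 * log (ρ k) := by
    have hM := one_le_colMonomial M k hge
    have hM' := one_le_colMonomial M' k hge
    rw [← log_colMonomial M k hpos, ← Nat.cast_ofNat, ← log_pow]
    exact log_lt_log (by linarith) (by linarith)
  exact ⟨fun k => log_pos (hρ k), fun k => ⟨hlt (hfix k), hlt ((hfix k).trans (add_comm _ _))⟩⟩

theorem exists_isFixedPointLabeling_of_le_sq {u : ι → ℝ} (hu : 1 ≤ u)
    (hsup : ∀ k, colMonomial Γ u k + colMonomial Δ u k ≤ u k ^ 2) :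
    ∃ ρ, IsFixedPointLabeling Γ Δ ρ := by
  set G : (ι → ℝ) → ι → ℝ := fun x k => √(colMonomial Γ x k + colMonomial Δ x k)
  have hGmono : MonotoneOn G (Icc 1 u) := fun x hx y _ hxy k =>
    sqrt_le_sqrt <| add_le_add (colMonomial_mono Γ k (zero_le_one.trans hx.1) hxy)
      (colMonomial_mono Δ k (zero_le_one.trans hx.1) hxy)
  have hG_one : 1 ≤ G 1 := fun k => by simp [G]
  have hG_u : G u ≤ u := fun k =>
    (sqrt_le_sqrt (hsup k)).trans_eq (sqrt_sq (zero_le_one.trans (hu k)))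
  obtain ⟨ρ, ⟨hρ, -⟩, hfix⟩ := exists_fixedPoint_mem_Icc hu hGmono hG_one hG_u
  have hsq k : ρ k ^ 2 = colMonomial Γ ρ k + colMonomial Δ ρ k := by
    rw [← congrFun hfix k]
    exact sq_sqrt (by linarith [one_le_colMonomial Γ k hρ, one_le_colMonomial Δ k hρ])
  refine ⟨ρ, fun k => ?_, hsq⟩
  have hρk : 1 ≤ ρ k := hρ k
  have hsq_gt : 1 ^ 2 < ρ k ^ 2 := by
    linarith [hsq k, one_le_colMonomial Γ k hρ, one_le_colMonomial Δ k hρ]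
  exact lt_of_pow_lt_pow_left₀ 2 (zero_le_one.trans hρk) hsq_gt

theorem IsStrictlySubadditiveLabeling.exists_isFixedPointLabeling {ν : ι → ℝ}
    (h : IsStrictlySubadditiveLabeling Γ Δ ν) : ∃ ρ, IsFixedPointLabeling Γ Δ ρ := by
  obtain ⟨hν, hsub⟩ := h
  have hgap {M : Matrix ι ι ℕ} (hM : ∀ k, ∑ i, (M i k : ℝ) * ν i < 2 * ν k) :
      ∀ᶠ t in atTop, ∀ k, log 2 ≤ t * (2 * ν k - ∑ i, (M i k : ℝ) * ν i) :=
    eventually_all.2 fun k =>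
      (tendsto_id.atTop_mul_const (sub_pos.2 (hM k))).eventually_ge_atTop (log 2)
  obtain ⟨t, ht, htΓ, htΔ⟩ :=
    ((eventually_ge_atTop 0).and ((hgap fun k => (hsub k).1).and (hgap fun k => (hsub k).2))).exists
  have hscale (M : Matrix ι ι ℕ) (k : ι) :
      t * (2 * ν k - ∑ i, (M i k : ℝ) * ν i) = 2 * (t * ν k) - ∑ i, (M i k : ℝ) * (t * ν i) := by
    rw [mul_sub, Finset.mul_sum]
    simp only [mul_left_comm t]
  refine exists_isFixedPointLabeling_of_le_sq (u := fun k => exp (t * ν k))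
    (fun k => one_le_exp (mul_nonneg ht (hν k).le)) fun k => ?_
  have hΓ := colMonomial_exp_le_half_sq Γ k (ν := fun i => t * ν i) ((htΓ k).trans_eq (hscale Γ k))
  have hΔ := colMonomial_exp_le_half_sq Δ k (ν := fun i => t * ν i) ((htΔ k).trans_eq (hscale Δ k))
  linarith

/-- For `n × n` matrices `Γ, Δ` with nonnegative integer entries,
`(Γ, Δ)` admits a fixed point labeling (a vector `ρ` with all entries `> 1` such that
`ρ k ^ 2 = ∏ i, ρ i ^ Γ i k + ∏ j, ρ j ^ Δ j k` for all `k`) if and only if it admits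
a strictly subadditive labeling (a positive vector `ν` with
`2 ν k > ∑ i, Γ i k * ν i` and `2 ν k > ∑ j, Δ j k * ν j` for all `k`). -/
theorem fixed_point_labeling_iff_strictly_subadditive_labeling
    (n : ℕ) (Γ Δ : Matrix (Fin n) (Fin n) ℕ) :
    (∃ ρ : Fin n → ℝ, (∀ k, 1 < ρ k) ∧
      ∀ k, ρ k ^ 2 = (∏ i, ρ i ^ (Γ i k)) + (∏ j, ρ j ^ (Δ j k))) ↔
    (∃ ν : Fin n → ℝ, (∀ k, 0 < ν k) ∧
      ∀ k, (∑ i, (Γ i k : ℝ) * ν i < 2 * ν k) ∧ (∑ j, (Δ j k : ℝ) * ν j < 2 * ν k)) :=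
  ⟨fun ⟨_, hρ⟩ => ⟨_, IsFixedPointLabeling.isStrictlySubadditiveLabeling_log hρ⟩,
    fun ⟨_, hν⟩ => IsStrictlySubadditiveLabeling.exists_isFixedPointLabeling hν⟩
end

section
/- Let Γ, Δ be n×n matrices with nonnegative integer entries having disjoint supports (Γ_{ij} > 0 implies Δ_{ij} = 0), let ε : {1,…,n} → {0,1} be a coloring with Γ_{ij} = Δ_{ij} = 0 whenever ε_i = ε_j, assume ΓΔ = ΔΓ, and assume there exists c ∈ ℝⁿ with positive entries satisfying c_i Γ_{ij} = c_j Γ_{ji} and c_i Δ_{ij} = c_j Δ_{ji} for all i, j. Suppose there is an integer N ≥ 1 such that for every λ ∈ ℝⁿ there exists a tropical T-system for (Γ, Δ, ε) with initial labeling λ, and every tropical T-system for (Γ, Δ, ε) with any initial labeling is periodic with period N. Then (Γ, Δ) admits a strictly subadditive labeling. -/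
/-! Conjugating by `D = diag (√c)` turns `Γ` and `Δ` into commuting symmetric nonnegative
matrices `F` and `G`. If `2 - F` were not positive definite, maximising the Rayleigh quotient
of `F` would give a nonnegative eigenvector of `Γ` with eigenvalue `μ ≥ 2`. Pairing a T-system
with it gives a sequence `L` with `L (t + 1) + L (t - 1) ≥ μ L t`, which grows linearly from
suitable initial data and so cannot be periodic. Hence `2 - F` and `2 - G` are positive
definite Z-matrices, whose inverses are nonnegative; for `x = (2 - F)⁻¹ (2 - G)⁻¹ 1` both
`(2 - F) x` and `(2 - G) x` are positive, and `D x` is a strictly subadditive labeling. -/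

open Matrix Finset

theorem Commute.conj_of_mul_eq_one {α : Type*} [Monoid α] {p q : α} (hqp : q * p = 1)
    {a b : α} (h : Commute a b) : Commute (p * a * q) (p * b * q) := by
  have key : ∀ x y : α, p * x * q * (p * y * q) = p * (x * y) * q := fun x y => by
    simp only [← mul_assoc, mul_assoc _ q p, hqp, mul_one]
  rw [Commute, SemiconjBy, key, key, h.eq]

variable {V : Type*} [Fintype V]

section TropicalTSystem

theorem IsTropicalTSystem.symm {Γ Δ : Matrix V V ℝ} {ε : V → Fin 2} {l : V → ℝ}
    {u : V → ℤ → ℝ} (h : IsTropicalTSystem Γ Δ ε l u) : IsTropicalTSystem Δ Γ ε l u :=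
  ⟨h.1, h.2.1, fun k t ht => by rw [h.2.2 k t ht, max_comm]⟩

theorem Fin.eq_of_even_add_iff {t : ℤ} {a b : Fin 2}
    (h : Even (t + ((a : ℕ) : ℤ)) ↔ Even (t + ((b : ℕ) : ℤ))) : a = b := by
  fin_cases a <;> fin_cases b <;> simp_all [← Int.not_even_iff_odd]

theorem sum_filter_not_mul_sum_eq {M : Matrix V V ℝ} (P : V → Prop) [DecidablePred P]
    (hM : ∀ i k, (P i ↔ P k) → M i k = 0) (a u : V → ℝ) :
    ∑ k ∈ univ.filter (¬P ·), a k * ∑ i, M i k * u i =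
      ∑ i ∈ univ.filter P, u i * ∑ k, M i k * a k := by
  simp only [sum_filter, ← ite_zero_mul]
  simp only [mul_sum]
  rw [sum_comm]
  refine sum_congr rfl fun i _ => sum_congr rfl fun k _ => ?_
  by_cases hi : P i <;> by_cases hk : P k <;> simp [hi, hk, hM i k]
  ring

/-- Only the vertices `k` with `t + ε k` even carry a value of the T-system at time `t`. -/
def tropicalPairing (ε : V → Fin 2) (a : V → ℝ) (u : V → ℤ → ℝ) (t : ℤ) : ℝ :=
  ∑ k ∈ univ.filter (fun k => Even (t + ((ε k : ℕ) : ℤ))), a k * u k t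

theorem IsTropicalTSystem.mul_tropicalPairing_le {Γ Δ : Matrix V V ℝ} {ε : V → Fin 2}
    (hbip : ∀ i j, ε i = ε j → Γ i j = 0) {l : V → ℝ} {u : V → ℤ → ℝ}
    (hu : IsTropicalTSystem Γ Δ ε l u) {a : V → ℝ} (ha : 0 ≤ a) {μ : ℝ}
    (heig : Γ *ᵥ a = μ • a) (t : ℤ) :
    μ * tropicalPairing ε a u t ≤
      tropicalPairing ε a u (t + 1) + tropicalPairing ε a u (t - 1) := by
  have hodd : ∀ s, s = t + 1 ∨ s = t - 1 → ∀ k,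
      (Even (s + ((ε k : ℕ) : ℤ)) ↔ ¬Even (t + ((ε k : ℕ) : ℤ))) := by
    rintro s (rfl | rfl) k
    · rw [add_right_comm, Int.even_add_one]
    · rw [sub_add_eq_add_sub, Int.even_sub_one]
  simp only [tropicalPairing, filter_congr fun k _ => hodd _ (.inl rfl) k,
    filter_congr fun k _ => hodd _ (.inr rfl) k, ← sum_add_distrib, ← mul_add]
  calc μ * ∑ k ∈ univ.filter (fun k => Even (t + ((ε k : ℕ) : ℤ))), a k * u k t
      = ∑ k ∈ univ.filter (fun k => ¬Even (t + ((ε k : ℕ) : ℤ))),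
          a k * ∑ i, Γ i k * u i t := by
        rw [sum_filter_not_mul_sum_eq _ (fun i k h => hbip i k (Fin.eq_of_even_add_iff h)),
          mul_sum]
        refine sum_congr rfl fun i _ => ?_
        rw [show ∑ k, Γ i k * a k = μ * a i from congrFun heig i]
        ring
    _ ≤ _ := by
        refine sum_le_sum fun k hk => mul_le_mul_of_nonneg_left ?_ (ha k)
        rw [hu.2.2 k t (Int.not_even_iff_odd.mp (mem_filter.mp hk).2)]
        exact le_max_left _ _

theorem tropicalPairing_add_two_mul {ε : V → Fin 2} {N : ℕ} {u : V → ℤ → ℝ}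
    (hper : IsPeriodicTropicalTSystem ε N u) (a : V → ℝ) (t : ℤ) :
    tropicalPairing ε a u (t + 2 * N) = tropicalPairing ε a u t := by
  have hpar : ∀ k, Even (t + 2 * N + ((ε k : ℕ) : ℤ)) ↔ Even (t + ((ε k : ℕ) : ℤ)) := fun k => by
    simp [Int.even_add, parity_simps]
  simp only [tropicalPairing, filter_congr fun k _ => hpar k]
  exact sum_congr rfl fun k hk => by rw [hper k t (mem_filter.mp hk).2]

theorem add_natCast_mul_sub_le_of_mul_le_add {s : ℤ → ℝ} {μ : ℝ} (hμ : 2 ≤ μ)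
    (hs : ∀ t, μ * s t ≤ s (t + 1) + s (t - 1)) (h0 : 0 ≤ s 0) (h01 : s 0 ≤ s 1) (m : ℕ) :
    s 0 + m * (s 1 - s 0) ≤ s m := by
  suffices ∀ m : ℕ, s 0 + m * (s 1 - s 0) ≤ s m ∧ s 1 - s 0 ≤ s (m + 1) - s m from (this m).1
  intro m
  induction m with
  | zero => simp
  | succ m ih =>
    have hstep := hs (m + 1)
    rw [add_sub_cancel_right] at hstep
    push_cast
    have hnn : 0 ≤ s (m + 1) := by nlinarith
    constructor
    · linarith
    · nlinarith

theorem exists_ne_zero_of_mulVec_eq_smul {Γ : Matrix V V ℝ} {ε : V → Fin 2}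
    (hbip : ∀ i j, ε i = ε j → Γ i j = 0) {a : V → ℝ} (ha : a ≠ 0) {μ : ℝ} (hμ : μ ≠ 0)
    (heig : Γ *ᵥ a = μ • a) (b : Fin 2) : ∃ k, ε k = b ∧ a k ≠ 0 := by
  by_contra! h
  refine ha (funext fun i => ?_)
  by_cases hi : ε i = b
  · exact h i hi
  · have hsum : ∑ k, Γ i k * a k = μ * a i := congrFun heig i
    have hzero : ∑ k, Γ i k * a k = 0 := sum_eq_zero fun k _ => by
      by_cases hk : ε k = b
      · rw [h k hk, mul_zero]
      · rw [hbip i k (by omega), zero_mul]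
    simpa [hμ] using hsum.symm.trans hzero

theorem IsTropicalTSystem.not_isPeriodic {Γ Δ : Matrix V V ℝ} {ε : V → Fin 2}
    (hbip : ∀ i j, ε i = ε j → Γ i j = 0) {a : V → ℝ} (ha : 0 ≤ a) (ha0 : a ≠ 0) {μ : ℝ}
    (hμ : 2 ≤ μ) (heig : Γ *ᵥ a = μ • a) {u : V → ℤ → ℝ}
    (hu : IsTropicalTSystem Γ Δ ε (fun k => if ε k = 0 then 0 else a k) u) {N : ℕ}
    (hN : 1 ≤ N) : ¬IsPeriodicTropicalTSystem ε N u := by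
  intro hper
  have hcolor : ∀ e : Fin 2, (Even ((0 : ℤ) + ((e : ℕ) : ℤ)) ↔ e = 0) ∧
      (Even ((1 : ℤ) + ((e : ℕ) : ℤ)) ↔ e = 1) := by decide
  have hL0 : tropicalPairing ε a u 0 = 0 := sum_eq_zero fun k hk => by
    have hk : ε k = 0 := ((hcolor _).1).mp (mem_filter.mp hk).2
    simp [hu.1 k hk, hk]
  have hL1 : 0 < tropicalPairing ε a u 1 := by
    obtain ⟨k, hk, hak⟩ := exists_ne_zero_of_mulVec_eq_smul hbip ha0 (by linarith) heig 1
    have hsq : ∀ j ∈ univ.filter (fun j => Even ((1 : ℤ) + ((ε j : ℕ) : ℤ))),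
        a j * u j 1 = a j * a j := fun j hj => by
      have hj : ε j = 1 := ((hcolor _).2).mp (mem_filter.mp hj).2
      simp [hu.2.1 j hj, hj]
    rw [tropicalPairing, sum_congr rfl hsq]
    exact sum_pos' (fun j _ => mul_self_nonneg _)
      ⟨k, mem_filter.mpr ⟨mem_univ k, ((hcolor _).2).mpr hk⟩, mul_self_pos.mpr hak⟩
  have hgrowth := add_natCast_mul_sub_le_of_mul_le_add hμ
    (hu.mul_tropicalPairing_le hbip ha heig) hL0.ge (hL0 ▸ hL1.le) (2 * N)
  have hreturn : tropicalPairing ε a u ((2 * N : ℕ) : ℤ) = 0 := by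
    simpa [hL0] using tropicalPairing_add_two_mul hper a 0
  rw [hL0, hreturn] at hgrowth
  have : (1 : ℝ) ≤ N := by exact_mod_cast hN
  push_cast at hgrowth
  nlinarith

end TropicalTSystem

theorem Matrix.dotProduct_mulVec_le_abs {F : Matrix V V ℝ} (hF : ∀ i j, 0 ≤ F i j)
    (x : V → ℝ) : x ⬝ᵥ F *ᵥ x ≤ |x| ⬝ᵥ F *ᵥ |x| := by
  simp only [dotProduct, mulVec, mul_sum]
  refine sum_le_sum fun i _ => sum_le_sum fun j _ => ?_
  calc x i * (F i j * x j) ≤ |x i * (F i j * x j)| := le_abs_self _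
    _ = |x| i * (F i j * |x| j) := by simp [abs_mul, abs_of_nonneg (hF i j)]

theorem Matrix.PosDef.nonneg_of_nonneg_mulVec {A : Matrix V V ℝ} (hA : A.PosDef)
    (hA0 : ∀ i j, i ≠ j → A i j ≤ 0) {x : V → ℝ} (hx : 0 ≤ A *ᵥ x) : 0 ≤ x := by
  have hx' : x⁺ - x⁻ = x := posPart_sub_negPart x
  by_contra h
  have hneg : x⁻ ≠ 0 := fun h0 => h (by rw [← hx', h0, sub_zero]; exact posPart_nonneg x)
  have hpos : 0 < x⁻ ⬝ᵥ A *ᵥ x⁻ := by simpa using hA.dotProduct_mulVec_pos hneg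
  have hcross : x⁻ ⬝ᵥ A *ᵥ x⁺ ≤ 0 := by
    simp only [dotProduct, mulVec, mul_sum]
    refine sum_nonpos fun i _ => sum_nonpos fun j _ => ?_
    rcases eq_or_ne i j with rfl | hij
    · rcases le_total (x i) 0 with hi | hi <;> simp [hi]
    · exact mul_nonpos_of_nonneg_of_nonpos (negPart_nonneg _)
        (mul_nonpos_of_nonpos_of_nonneg (hA0 i j hij) (posPart_nonneg _))
  have hsplit : 0 ≤ x⁻ ⬝ᵥ A *ᵥ (x⁺ - x⁻) := by
    rw [hx']
    exact dotProduct_nonneg_of_nonneg (negPart_nonneg x) hx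
  rw [mulVec_sub, dotProduct_sub] at hsplit
  linarith

variable [DecidableEq V]

section Symmetrization

theorem Matrix.mulVec_mulVec_eq_smul_of_conj {R : Type*} [CommRing R] {p q a : Matrix V V R}
    (hqp : q * p = 1) {w : V → R} {μ : R} (h : (p * a * q) *ᵥ w = μ • w) :
    a *ᵥ (q *ᵥ w) = μ • (q *ᵥ w) := by
  rw [← mulVec_smul, ← h, mulVec_mulVec, mulVec_mulVec, ← Matrix.mul_assoc, ← Matrix.mul_assoc,
    hqp, Matrix.one_mul]

theorem Matrix.diagonal_inv_mul_diagonal {d : V → ℝ} (hd : ∀ i, d i ≠ 0) :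
    diagonal d⁻¹ * diagonal d = 1 := by
  rw [diagonal_mul_diagonal, ← diagonal_one]
  exact congrArg diagonal (funext fun i => inv_mul_cancel₀ (hd i))

theorem Matrix.diagonal_mul_mul_diagonal_apply (d e : V → ℝ) (M : Matrix V V ℝ) (i j : V) :
    (diagonal d * M * diagonal e) i j = d i * M i j * e j := by
  simp [mul_diagonal, diagonal_mul]

theorem Matrix.diagonal_mul_mul_diagonal_inv_nonneg {d : V → ℝ} (hd : ∀ i, 0 < d i)
    {M : Matrix V V ℝ} (hM : ∀ i j, 0 ≤ M i j) (i j : V) :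
    0 ≤ (diagonal d * M * diagonal d⁻¹) i j := by
  rw [diagonal_mul_mul_diagonal_apply, Pi.inv_apply]
  have := hd i
  have := hd j
  have := hM i j
  positivity

theorem Matrix.isHermitian_diagonal_mul_mul_diagonal_inv {d : V → ℝ} (hd : ∀ i, d i ≠ 0)
    {M : Matrix V V ℝ} (hM : ∀ i j, d i ^ 2 * M i j = d j ^ 2 * M j i) :
    (diagonal d * M * diagonal d⁻¹).IsHermitian := by
  ext i j
  simp only [conjTranspose_apply, star_trivial, diagonal_mul_mul_diagonal_apply, Pi.inv_apply]
  have := hd i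
  have := hd j
  field_simp
  linear_combination hM j i

theorem Matrix.sum_mul_mul_apply_eq_mul_mulVec {d : V → ℝ} (hd : ∀ i, d i ≠ 0)
    {M : Matrix V V ℝ} (hM : ∀ i j, d i ^ 2 * M i j = d j ^ 2 * M j i) (x : V → ℝ) (k : V) :
    ∑ i, M i k * (d * x) i = d k * ((diagonal d * M * diagonal d⁻¹) *ᵥ x) k := by
  simp only [mulVec, dotProduct, diagonal_mul_mul_diagonal_apply, Pi.inv_apply, Pi.mul_apply,
    mul_sum]
  refine sum_congr rfl fun i _ => ?_
  have := hd i
  have := hd k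
  field_simp
  linear_combination x i * hM i k

end Symmetrization

section PositiveDefinite

theorem Matrix.reApplyInnerSelf_toEuclideanCLM (F : Matrix V V ℝ) (x : EuclideanSpace ℝ V) :
    (toEuclideanCLM (𝕜 := ℝ) F).reApplyInnerSelf x = x.ofLp ⬝ᵥ F *ᵥ x.ofLp := by
  rw [ContinuousLinearMap.reApplyInnerSelf_apply, RCLike.re_to_real, real_inner_comm,
    inner_toEuclideanCLM]

theorem Matrix.IsHermitian.exists_nonneg_eigenvector_of_le_dotProduct_mulVec
    {F : Matrix V V ℝ} (hF : F.IsHermitian) (hF0 : ∀ i j, 0 ≤ F i j) {r : ℝ} {v : V → ℝ}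
    (hv : v ≠ 0) (hr : r * (v ⬝ᵥ v) ≤ v ⬝ᵥ F *ᵥ v) :
    ∃ w : V → ℝ, 0 ≤ w ∧ w ≠ 0 ∧ ∃ μ, r ≤ μ ∧ F *ᵥ w = μ • w := by
  set T := toEuclideanCLM (𝕜 := ℝ) F
  have hT : IsSelfAdjoint T := (isHermitian_iff_isSelfAdjoint.mp hF).map _
  have : Nonempty V := let ⟨i, _⟩ := Function.ne_iff.mp hv; ⟨i⟩
  obtain ⟨x, hx, hmax⟩ := (isCompact_sphere (0 : EuclideanSpace ℝ V) 1).exists_isMaxOn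
    (NormedSpace.sphere_nonempty.mpr zero_le_one) T.reApplyInnerSelf_continuous.continuousOn
  -- `F ≥ 0`, so `|x|` is a maximiser as well, hence a nonnegative eigenvector
  set w := WithLp.toLp 2 |x.ofLp|
  have hw : ‖w‖ = 1 := by simpa [w, EuclideanSpace.norm_eq] using hx
  have hw0 : w ≠ 0 := fun h => by simp [h] at hw
  have hwmax : IsMaxOn T.reApplyInnerSelf (Metric.sphere 0 ‖w‖) w := by
    intro y hy
    rw [hw] at hy
    refine (isMaxOn_iff.mp hmax y hy).trans ?_
    simp only [T, reApplyInnerSelf_toEuclideanCLM]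
    exact dotProduct_mulVec_le_abs hF0 _
  refine ⟨w.ofLp, fun i => abs_nonneg _, by simpa using hw0,
    ⨆ y : {y : EuclideanSpace ℝ V // y ≠ 0}, T.rayleighQuotient y, ?_, ?_⟩
  · have hbdd : BddAbove (Set.range fun y : {y : EuclideanSpace ℝ V // y ≠ 0} =>
        T.rayleighQuotient y) :=
      ⟨‖T‖, by rintro _ ⟨y, rfl⟩; exact (le_abs_self _).trans (T.rayleighQuotient_le_norm y)⟩
    refine le_trans ?_ (le_ciSup hbdd ⟨WithLp.toLp 2 v, by simpa using hv⟩)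
    have hvv : 0 < v ⬝ᵥ v := by simpa using dotProduct_self_star_pos_iff.mpr hv
    have hsq : ∑ i, v i ^ 2 = v ⬝ᵥ v := by simp only [dotProduct, sq]
    simp only [ContinuousLinearMap.rayleighQuotient, T, reApplyInnerSelf_toEuclideanCLM,
      EuclideanSpace.real_norm_sq_eq]
    rwa [hsq, le_div_iff₀ hvv]
  · simpa [T] using congrArg WithLp.ofLp (hT.hasEigenvector_of_isMaxOn hw0 hwmax).apply_eq_smul

theorem Matrix.smul_one_sub_mulVec (r : ℝ) (F : Matrix V V ℝ) (x : V → ℝ) :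
    (r • 1 - F) *ᵥ x = r • x - F *ᵥ x := by
  rw [sub_mulVec, smul_mulVec, one_mulVec]

theorem Matrix.IsHermitian.exists_nonneg_eigenvector_of_not_posDef {F : Matrix V V ℝ}
    (hF : F.IsHermitian) (hF0 : ∀ i j, 0 ≤ F i j) {r : ℝ} (h : ¬(r • 1 - F).PosDef) :
    ∃ w : V → ℝ, 0 ≤ w ∧ w ≠ 0 ∧ ∃ μ, r ≤ μ ∧ F *ᵥ w = μ • w := by
  have : ∃ v : V → ℝ, v ≠ 0 ∧ r * (v ⬝ᵥ v) ≤ v ⬝ᵥ F *ᵥ v := by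
    by_contra! hv
    refine h (.of_dotProduct_mulVec_pos
      ((isHermitian_one.smul (IsSelfAdjoint.all r)).sub hF) fun v hv0 => ?_)
    simpa [smul_one_sub_mulVec, dotProduct_sub, dotProduct_smul] using hv v hv0
  obtain ⟨v, hv, hr⟩ := this
  exact hF.exists_nonneg_eigenvector_of_le_dotProduct_mulVec hF0 hv hr

theorem Matrix.PosDef.pos_of_pos_smul_sub_mulVec {F : Matrix V V ℝ} (hF0 : ∀ i j, 0 ≤ F i j)
    {r : ℝ} (hA : (r • 1 - F).PosDef) {x : V → ℝ} (hx : ∀ i, 0 < r * x i - (F *ᵥ x) i)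
    (i : V) : 0 < x i := by
  have hx0 : 0 ≤ x := by
    refine hA.nonneg_of_nonneg_mulVec (fun i j hij => ?_) fun i => ?_
    · simp [one_apply_ne hij, hF0 i j]
    · simpa [smul_one_sub_mulVec] using (hx i).le
  have hFx : 0 ≤ (F *ᵥ x) i := sum_nonneg fun j _ => mul_nonneg (hF0 i j) (hx0 j)
  refine lt_of_le_of_ne (hx0 i) fun h => ?_
  have := hx i
  rw [← h, mul_zero] at this
  linarith

theorem exists_pos_mulVec_lt_of_posDef {F G : Matrix V V ℝ} (hF0 : ∀ i j, 0 ≤ F i j)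
    (hG0 : ∀ i j, 0 ≤ G i j) (hFG : Commute F G) {r : ℝ} (hF : (r • 1 - F).PosDef)
    (hG : (r • 1 - G).PosDef) :
    ∃ x : V → ℝ, (∀ i, 0 < x i) ∧ ∀ i, (F *ᵥ x) i < r * x i ∧ (G *ᵥ x) i < r * x i := by
  have hcomm : Commute (r • 1 - F) (r • 1 - G) :=
    ((Commute.one_left _).smul_left r).sub_left
      (((Commute.one_right F).smul_right r).sub_right hFG)
  obtain ⟨y, hy⟩ := mulVec_surjective_iff_isUnit.mpr hG.isUnit 1
  obtain ⟨x, hx⟩ := mulVec_surjective_iff_isUnit.mpr hF.isUnit y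
  obtain ⟨z, hz⟩ := mulVec_surjective_iff_isUnit.mpr hF.isUnit 1
  have hGx : (r • 1 - G) *ᵥ x = z := mulVec_injective_of_isUnit hF.isUnit <| by
    rw [mulVec_mulVec, hcomm.eq, ← mulVec_mulVec, hx, hy, hz]
  simp only [smul_one_sub_mulVec, funext_iff, Pi.sub_apply, Pi.smul_apply, smul_eq_mul,
    Pi.one_apply] at hx hy hz hGx
  have hypos := hG.pos_of_pos_smul_sub_mulVec hG0 (x := y) fun i => by linarith [hy i]
  have hzpos := hF.pos_of_pos_smul_sub_mulVec hF0 (x := z) fun i => by linarith [hz i]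
  have hxpos := hF.pos_of_pos_smul_sub_mulVec hF0 (x := x) fun i => by linarith [hx i, hypos i]
  exact ⟨x, hxpos, fun i => ⟨by linarith [hx i, hypos i], by linarith [hGx i, hzpos i]⟩⟩

end PositiveDefinite

theorem posDef_two_smul_one_sub_of_periodic {Γ Δ : Matrix V V ℝ} {ε : V → Fin 2}
    (hbip : ∀ i j, ε i = ε j → Γ i j = 0) (hΓ0 : ∀ i j, 0 ≤ Γ i j) {d : V → ℝ}
    (hd : ∀ i, 0 < d i) (hsymm : ∀ i j, d i ^ 2 * Γ i j = d j ^ 2 * Γ j i) {N : ℕ} (hN : 1 ≤ N)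
    (hexists : ∀ l : V → ℝ, ∃ u : V → ℤ → ℝ, IsTropicalTSystem Γ Δ ε l u)
    (hper : ∀ (l : V → ℝ) (u : V → ℤ → ℝ),
      IsTropicalTSystem Γ Δ ε l u → IsPeriodicTropicalTSystem ε N u) :
    ((2 : ℝ) • 1 - diagonal d * Γ * diagonal d⁻¹).PosDef := by
  have hd0 : ∀ i, d i ≠ 0 := fun i => (hd i).ne'
  by_contra h
  obtain ⟨w, hw, hw0, μ, hμ, heig⟩ :=
    (isHermitian_diagonal_mul_mul_diagonal_inv hd0 hsymm).exists_nonneg_eigenvector_of_not_posDef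
      (diagonal_mul_mul_diagonal_inv_nonneg hd hΓ0) h
  have ha : 0 ≤ diagonal d⁻¹ *ᵥ w := fun i => by
    simpa [mulVec_diagonal] using mul_nonneg (inv_nonneg.mpr (hd i).le) (hw i)
  have ha0 : diagonal d⁻¹ *ᵥ w ≠ 0 := fun h0 => hw0 <| funext fun i => by
    simpa [mulVec_diagonal, hd0 i] using congrFun h0 i
  obtain ⟨u, hu⟩ := hexists _
  exact hu.not_isPeriodic hbip ha ha0 hμ
    (mulVec_mulVec_eq_smul_of_conj (diagonal_inv_mul_diagonal hd0) heig) hN (hper _ _ hu)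

theorem tropical_periodicity_implies_strictly_subadditive_general
    (n : ℕ) (Γ Δ : Matrix (Fin n) (Fin n) ℝ)
    (hΓint : ∀ i j, ∃ a : ℕ, Γ i j = (a : ℝ)) (hΔint : ∀ i j, ∃ a : ℕ, Δ i j = (a : ℝ))
    (ε : Fin n → Fin 2)
    (hbip : ∀ i j, ε i = ε j → Γ i j = 0 ∧ Δ i j = 0)
    (hcomm : Γ * Δ = Δ * Γ)
    (c : Fin n → ℝ) (hc : ∀ i, 0 < c i)
    (hcΓ : ∀ i j, c i * Γ i j = c j * Γ j i)
    (hcΔ : ∀ i j, c i * Δ i j = c j * Δ j i)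
    (N : ℕ) (hN : 1 ≤ N)
    (hexists : ∀ l : Fin n → ℝ, ∃ u : Fin n → ℤ → ℝ, IsTropicalTSystem Γ Δ ε l u)
    (hper : ∀ (l : Fin n → ℝ) (u : Fin n → ℤ → ℝ),
      IsTropicalTSystem Γ Δ ε l u → IsPeriodicTropicalTSystem ε N u) :
    ∃ ν : Fin n → ℝ, (∀ k, 0 < ν k) ∧
      ∀ k, (∑ i, Γ i k * ν i < 2 * ν k) ∧ (∑ j, Δ j k * ν j < 2 * ν k) := by
  have hΓ0 : ∀ i j, 0 ≤ Γ i j := fun i j => by obtain ⟨a, ha⟩ := hΓint i j; exact ha ▸ a.cast_nonneg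
  have hΔ0 : ∀ i j, 0 ≤ Δ i j := fun i j => by obtain ⟨a, ha⟩ := hΔint i j; exact ha ▸ a.cast_nonneg
  set d : Fin n → ℝ := fun i => √(c i)
  have hd : ∀ i, 0 < d i := fun i => Real.sqrt_pos.mpr (hc i)
  have hd0 : ∀ i, d i ≠ 0 := fun i => (hd i).ne'
  have hsq : ∀ i, d i ^ 2 = c i := fun i => Real.sq_sqrt (hc i).le
  have hsΓ : ∀ i j, d i ^ 2 * Γ i j = d j ^ 2 * Γ j i := by simpa only [hsq] using hcΓ
  have hsΔ : ∀ i j, d i ^ 2 * Δ i j = d j ^ 2 * Δ j i := by simpa only [hsq] using hcΔ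
  obtain ⟨x, hx, hlt⟩ := exists_pos_mulVec_lt_of_posDef
    (diagonal_mul_mul_diagonal_inv_nonneg hd hΓ0) (diagonal_mul_mul_diagonal_inv_nonneg hd hΔ0)
    (Commute.conj_of_mul_eq_one (diagonal_inv_mul_diagonal hd0) hcomm)
    (posDef_two_smul_one_sub_of_periodic (fun i j h => (hbip i j h).1) hΓ0 hd hsΓ hN hexists hper)
    (posDef_two_smul_one_sub_of_periodic (fun i j h => (hbip i j h).2) hΔ0 hd hsΔ hN
      (fun l => (hexists l).imp fun _ => IsTropicalTSystem.symm) fun l u hu => hper l u hu.symm)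
  refine ⟨d * x, fun k => mul_pos (hd k) (hx k), fun k => ⟨?_, ?_⟩⟩
  · rw [sum_mul_mul_apply_eq_mul_mulVec hd0 hsΓ, Pi.mul_apply, mul_left_comm]
    exact mul_lt_mul_of_pos_left (hlt k).1 (hd k)
  · rw [sum_mul_mul_apply_eq_mul_mulVec hd0 hsΔ, Pi.mul_apply, mul_left_comm]
    exact mul_lt_mul_of_pos_left (hlt k).2 (hd k)

/-- Let `Γ, Δ` be matrices with nonnegative integer entries and disjoint
supports, bipartite with respect to a coloring `ε`, commuting, and skew-symmetrizable
(symmetrizer `c`). If tropical T-systems for `(Γ, Δ, ε)` exist for every initial labeling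
and all of them are periodic with period `N ≥ 1`, then `(Γ, Δ)` admits a strictly
subadditive labeling. -/
theorem tropical_periodicity_implies_strictly_subadditive
    (n : ℕ) (Γ Δ : Matrix (Fin n) (Fin n) ℝ)
    (hΓint : ∀ i j, ∃ a : ℕ, Γ i j = (a : ℝ)) (hΔint : ∀ i j, ∃ a : ℕ, Δ i j = (a : ℝ))
    (hdisj : ∀ i j, 0 < Γ i j → Δ i j = 0)
    (ε : Fin n → Fin 2)
    (hbip : ∀ i j, ε i = ε j → Γ i j = 0 ∧ Δ i j = 0)
    (hcomm : Γ * Δ = Δ * Γ)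
    (c : Fin n → ℝ) (hc : ∀ i, 0 < c i)
    (hcΓ : ∀ i j, c i * Γ i j = c j * Γ j i)
    (hcΔ : ∀ i j, c i * Δ i j = c j * Δ j i)
    (N : ℕ) (hN : 1 ≤ N)
    (hexists : ∀ l : Fin n → ℝ, ∃ u : Fin n → ℤ → ℝ, IsTropicalTSystem Γ Δ ε l u)
    (hper : ∀ (l : Fin n → ℝ) (u : Fin n → ℤ → ℝ),
      IsTropicalTSystem Γ Δ ε l u → IsPeriodicTropicalTSystem ε N u) :
    ∃ ν : Fin n → ℝ, (∀ k, 0 < ν k) ∧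
      ∀ k, (∑ i, Γ i k * ν i < 2 * ν k) ∧ (∑ j, Δ j k * ν j < 2 * ν k) :=
  tropical_periodicity_implies_strictly_subadditive_general n Γ Δ hΓint hΔint ε hbip hcomm c hc hcΓ
    hcΔ N hN hexists hper
end

section
/- Let Γ, Δ be n×n real matrices with nonnegative entries such that ΓΔ = ΔΓ and Γ + Δ is irreducible. Assume that every real eigenvalue μ of Γ satisfies μ < 2 and every real eigenvalue μ of Δ satisfies μ < 2. Then (Γ, Δ) admits a strictly subadditive labeling: there exists ν ∈ ℝⁿ with all entries positive such that for every k, 2ν_k > Σ_i Γ_{ik} ν_i and 2ν_k > Σ_j Δ_{jk} ν_j. -/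
/-!
For a nonnegative matrix `A` such that `1 - t • A` is invertible for all `t ∈ [0, b]`, the
inverses `(1 - t • A)⁻¹` are entrywise nonnegative on `[0, b]`: the set of such `t` is closed by
continuity of the inverse, and it extends to the right of each of its points `x`, because
`(1 - t • A)⁻¹ = (1 - (t - x) • S A)⁻¹ S` with `S = (1 - x • A)⁻¹`, and for `t` close to `x` the first
factor is a convergent Neumann series of nonnegative matrices. The eigenvalue bounds make
`1 - t • Γ` and `1 - t • Δ` invertible for `t ≤ 1/2`.

So `S = (1 - Γ/2)⁻¹` and `T = (1 - Δ/2)⁻¹` are nonnegative and commute, with `S Γ = 2 (S - 1)` and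
`T Δ = 2 (T - 1)`. Let `ν` be the vector of column sums of `S T`. Then `νᵀ Γ = 2 νᵀ - 2 · 1ᵀ T` and
`νᵀ Δ = 2 νᵀ - 2 · 1ᵀ S`, and the column sums of `S` and `T` are positive.
-/

open Filter Topology Set

namespace Matrix

variable {ι : Type*}

def Nonneg (M : Matrix ι ι ℝ) : Prop := ∀ i j, 0 ≤ M i j

namespace Nonneg

variable {A B : Matrix ι ι ℝ}

lemma mul [Fintype ι] (hA : A.Nonneg) (hB : B.Nonneg) : (A * B).Nonneg := fun i j =>
  Finset.sum_nonneg fun k _ => mul_nonneg (hA i k) (hB k j)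

lemma one [DecidableEq ι] : (1 : Matrix ι ι ℝ).Nonneg := fun i j => by
  by_cases h : i = j <;> simp [one_apply, h]

lemma pow [Fintype ι] [DecidableEq ι] (hA : A.Nonneg) (k : ℕ) : (A ^ k).Nonneg := by
  induction k with
  | zero => exact one
  | succ k ih => rw [pow_succ]; exact ih.mul hA

lemma smul (hA : A.Nonneg) {c : ℝ} (hc : 0 ≤ c) : (c • A).Nonneg := fun i j =>
  mul_nonneg hc (hA i j)

end Nonneg

lemma isClosed_setOf_nonneg : IsClosed {M : Matrix ι ι ℝ | M.Nonneg} := by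
  simp only [Nonneg, ofPred_forall]
  exact isClosed_iInter fun i => isClosed_iInter fun j =>
    isClosed_le continuous_const ((continuous_apply j).comp (continuous_apply i))

lemma sum_pos_and_sum_mul_lt_of_mul_eq_smul_sub [Fintype ι] {R M T : Matrix ι ι ℝ}
    (hR : R.Nonneg) (hM : M.Nonneg) {c : ℝ} (hc : 0 < c) (hT : ∀ k, 0 < ∑ i, T i k)
    (hRM : R * M = c • (R - T)) (k : ι) :
    0 < ∑ i, R i k ∧ ∑ i, M i k * ∑ l, R l i < c * ∑ i, R i k := by
  have hsum : ∑ i, M i k * ∑ l, R l i = c * (∑ i, R i k - ∑ i, T i k) := by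
    calc ∑ i, M i k * ∑ l, R l i = ∑ l, (R * M) l k := by
          simp only [mul_apply, Finset.mul_sum]
          rw [Finset.sum_comm]
          simp only [mul_comm]
      _ = c * (∑ i, R i k - ∑ i, T i k) := by
          simp only [hRM, smul_apply, sub_apply, smul_eq_mul]
          rw [← Finset.mul_sum, Finset.sum_sub_distrib]
  have hnonneg : 0 ≤ ∑ i, M i k * ∑ l, R l i :=
    Finset.sum_nonneg fun i _ => mul_nonneg (hM i k) (Finset.sum_nonneg fun l _ => hR l i)
  have hTk := hT k
  constructor <;> nlinarith

variable [Fintype ι] [DecidableEq ι]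

lemma eventually_nonneg_inv_one_sub_smul {Y : Matrix ι ι ℝ} (hY : Y.Nonneg) :
    ∀ᶠ h in 𝓝 (0 : ℝ), 0 ≤ h → (1 - h • Y)⁻¹.Nonneg := by
  let : NormedRing (Matrix ι ι ℝ) := Matrix.linftyOpNormedRing
  let : NormedAlgebra ℝ (Matrix ι ι ℝ) := Matrix.linftyOpNormedAlgebra
  have hsmall : ∀ᶠ h in 𝓝 (0 : ℝ), ‖h • Y‖ < 1 := by
    have : Tendsto (fun h : ℝ => ‖h • Y‖) (𝓝 0) (𝓝 0) := by
      simpa using ((continuous_id.smul continuous_const).norm.tendsto (0 : ℝ) :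
        Tendsto (fun h : ℝ => ‖h • Y‖) _ _)
    exact this.eventually (gt_mem_nhds one_pos)
  filter_upwards [hsmall] with h hnorm hh
  rw [inv_eq_right_inv (mul_neg_geom_series _ hnorm)]
  refine isClosed_setOf_nonneg.mem_of_tendsto (summable_geometric_of_norm_lt_one hnorm).hasSum
    (Eventually.of_forall fun s i j => ?_)
  rw [sum_apply]
  exact Finset.sum_nonneg fun k _ => (hY.smul hh).pow k i j

lemma eventually_nonneg_inv_one_sub_smul_nhdsGT {A : Matrix ι ι ℝ} (hA : A.Nonneg) {x : ℝ}
    (hx : IsUnit (1 - x • A)) (hxA : (1 - x • A)⁻¹.Nonneg) :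
    ∀ᶠ t in 𝓝[>] x, (1 - t • A)⁻¹.Nonneg := by
  set S := (1 - x • A)⁻¹
  have hS : (1 - x • A) * S = 1 := mul_nonsing_inv _ ((isUnit_iff_isUnit_det _).mp hx)
  have hfactor : ∀ t : ℝ, 1 - t • A = (1 - x • A) * (1 - (t - x) • (S * A)) := fun t => by
    rw [mul_sub, mul_one, mul_smul_comm, ← mul_assoc, hS, one_mul, sub_smul]
    abel
  have hnear : Tendsto (fun t => t - x) (𝓝[>] x) (𝓝 0) :=
    tendsto_nhdsWithin_of_tendsto_nhds (by simpa using (continuous_sub_right x).tendsto x)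
  filter_upwards [hnear.eventually (eventually_nonneg_inv_one_sub_smul (hxA.mul hA)),
    self_mem_nhdsWithin] with t ht hxt
  rw [hfactor, mul_inv_rev]
  exact (ht (sub_nonneg.mpr hxt.le)).mul hxA

lemma nonneg_inv_one_sub_smul {A : Matrix ι ι ℝ} (hA : A.Nonneg) {b : ℝ}
    (hunit : ∀ t ∈ Icc 0 b, IsUnit (1 - t • A)) : ∀ t ∈ Icc 0 b, (1 - t • A)⁻¹.Nonneg := by
  have hcont : ContinuousOn (fun t : ℝ => (1 - t • A)⁻¹) (Icc 0 b) := fun t ht => by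
    have hdet := (isUnit_iff_isUnit_det _).mp (hunit t ht)
    refine ((continuousAt_matrix_inv _ ?_).comp (by fun_prop)).continuousWithinAt
    rw [Ring.inverse_eq_inv']
    exact continuousAt_inv₀ hdet.ne_zero
  have hclosed := hcont.preimage_isClosed_of_isClosed isClosed_Icc isClosed_setOf_nonneg
  rw [inter_comm] at hclosed
  refine hclosed.Icc_subset_of_forall_mem_nhdsWithin (by simpa using Nonneg.one) ?_
  exact fun x ⟨hx, hxb⟩ => eventually_nonneg_inv_one_sub_smul_nhdsGT hA
    (hunit x (Ico_subset_Icc_self hxb)) hx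

lemma isUnit_one_sub_smul_of_eigenvalue_lt {A : Matrix ι ι ℝ} {c : ℝ}
    (heig : ∀ μ : ℝ, (∃ v : ι → ℝ, v ≠ 0 ∧ A *ᵥ v = μ • v) → μ < c) {t : ℝ} (ht : 0 ≤ t)
    (htc : t * c ≤ 1) : IsUnit (1 - t • A) := by
  rw [isUnit_iff_isUnit_det, isUnit_iff_ne_zero]
  intro hdet
  obtain ⟨v, hv0, hv⟩ := exists_mulVec_eq_zero_iff.mpr hdet
  rw [sub_mulVec, one_mulVec, smul_mulVec, sub_eq_zero] at hv
  have ht0 : t ≠ 0 := by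
    rintro rfl
    exact hv0 (by simpa using hv)
  have hAv : A *ᵥ v = t⁻¹ • v := by
    conv_rhs => rw [hv]
    rw [smul_smul, inv_mul_cancel₀ ht0, one_smul]
  have hlt : t * t⁻¹ < t * c :=
    mul_lt_mul_of_pos_left (heig t⁻¹ ⟨v, hv0, hAv⟩) (lt_of_le_of_ne ht (Ne.symm ht0))
  rw [mul_inv_cancel₀ ht0] at hlt
  linarith

lemma nonneg_inv_one_sub_inv_smul_and_mul_eq {A : Matrix ι ι ℝ} (hA : A.Nonneg) {c : ℝ}
    (hc : 0 < c) (heig : ∀ μ : ℝ, (∃ v : ι → ℝ, v ≠ 0 ∧ A *ᵥ v = μ • v) → μ < c) :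
    (1 - c⁻¹ • A)⁻¹.Nonneg ∧ (1 - c⁻¹ • A)⁻¹ * A = c • ((1 - c⁻¹ • A)⁻¹ - 1) := by
  have hunit : ∀ t ∈ Icc 0 c⁻¹, IsUnit (1 - t • A) := fun t ht =>
    isUnit_one_sub_smul_of_eigenvalue_lt heig ht.1
      (by simpa [hc.ne'] using mul_le_mul_of_nonneg_right ht.2 hc.le)
  have hmem : c⁻¹ ∈ Icc 0 c⁻¹ := ⟨inv_nonneg.mpr hc.le, le_rfl⟩
  refine ⟨nonneg_inv_one_sub_smul hA hunit _ hmem, ?_⟩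
  have h := nonsing_inv_mul _ ((isUnit_iff_isUnit_det _).mp (hunit _ hmem))
  set S := (1 - c⁻¹ • A)⁻¹
  rw [mul_sub, mul_one, mul_smul_comm] at h
  have hS1 : S - 1 = c⁻¹ • (S * A) := by rw [← h, sub_sub_cancel]
  rw [hS1, smul_inv_smul₀ hc.ne']

lemma commute_inv_one_sub_smul {R : Type*} [CommRing R] {A B : Matrix ι ι R}
    (h : Commute A B) (a b : R) : Commute (1 - a • A)⁻¹ (1 - b • B)⁻¹ := by
  have h' : Commute (1 - a • A) (1 - b • B) :=
    (Commute.one_left _).sub_left ((Commute.one_right _).sub_right ((h.smul_left _).smul_right _))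
  simpa only [← nonsing_inv_eq_ringInverse] using h'.ringInverse_ringInverse

end Matrix

open Matrix in
theorem strictly_subadditive_labeling_of_eigenvalues_lt_two_general
    (n : ℕ) (Γ Δ : Matrix (Fin n) (Fin n) ℝ)
    (hΓ0 : ∀ i j, 0 ≤ Γ i j) (hΔ0 : ∀ i j, 0 ≤ Δ i j)
    (hcomm : Γ * Δ = Δ * Γ)
    (hΓeig : ∀ μ : ℝ, (∃ v : Fin n → ℝ, v ≠ 0 ∧ Γ.mulVec v = μ • v) → μ < 2)
    (hΔeig : ∀ μ : ℝ, (∃ v : Fin n → ℝ, v ≠ 0 ∧ Δ.mulVec v = μ • v) → μ < 2) :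
    ∃ ν : Fin n → ℝ, (∀ k, 0 < ν k) ∧
      ∀ k, (∑ i, Γ i k * ν i < 2 * ν k) ∧ (∑ j, Δ j k * ν j < 2 * ν k) := by
  obtain ⟨hS0, hSΓ⟩ := nonneg_inv_one_sub_inv_smul_and_mul_eq hΓ0 two_pos hΓeig
  obtain ⟨hT0, hTΔ⟩ := nonneg_inv_one_sub_inv_smul_and_mul_eq hΔ0 two_pos hΔeig
  set S := (1 - (2 : ℝ)⁻¹ • Γ)⁻¹
  set T := (1 - (2 : ℝ)⁻¹ • Δ)⁻¹
  have hST : Commute S T := commute_inv_one_sub_smul hcomm _ _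
  have hSTΓ : S * T * Γ = (2 : ℝ) • (S * T - T) := by
    rw [hST.eq, mul_assoc, hSΓ, mul_smul_comm, mul_sub, mul_one]
  have hSTΔ : S * T * Δ = (2 : ℝ) • (S * T - S) := by
    rw [mul_assoc, hTΔ, mul_smul_comm, mul_sub, mul_one]
  have hone : ∀ k, 0 < ∑ i, (1 : Matrix (Fin n) (Fin n) ℝ) i k := fun k => by simp [one_apply]
  have hS := sum_pos_and_sum_mul_lt_of_mul_eq_smul_sub hS0 hΓ0 two_pos hone hSΓ
  have hT := sum_pos_and_sum_mul_lt_of_mul_eq_smul_sub hT0 hΔ0 two_pos hone hTΔ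
  have hΓlt := sum_pos_and_sum_mul_lt_of_mul_eq_smul_sub (hS0.mul hT0) hΓ0 two_pos
    (fun k => (hT k).1) hSTΓ
  have hΔlt := sum_pos_and_sum_mul_lt_of_mul_eq_smul_sub (hS0.mul hT0) hΔ0 two_pos
    (fun k => (hS k).1) hSTΔ
  exact ⟨fun k => ∑ i, (S * T) i k, fun k => (hΓlt k).1, fun k => ⟨(hΓlt k).2, (hΔlt k).2⟩⟩

/-- Commuting nonnegative matrices `Γ, Δ` with `Γ + Δ` irreducible and all
real eigenvalues of each strictly less than `2` admit a strictly subadditive labeling. -/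
theorem strictly_subadditive_labeling_of_eigenvalues_lt_two
    (n : ℕ) (Γ Δ : Matrix (Fin n) (Fin n) ℝ)
    (hΓ0 : ∀ i j, 0 ≤ Γ i j) (hΔ0 : ∀ i j, 0 ≤ Δ i j)
    (hcomm : Γ * Δ = Δ * Γ)
    (hirr : ∀ i j, ∃ m : ℕ, 1 ≤ m ∧ 0 < ((Γ + Δ) ^ m) i j)
    (hΓeig : ∀ μ : ℝ, (∃ v : Fin n → ℝ, v ≠ 0 ∧ Γ.mulVec v = μ • v) → μ < 2)
    (hΔeig : ∀ μ : ℝ, (∃ v : Fin n → ℝ, v ≠ 0 ∧ Δ.mulVec v = μ • v) → μ < 2) :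
    ∃ ν : Fin n → ℝ, (∀ k, 0 < ν k) ∧
      ∀ k, (∑ i, Γ i k * ν i < 2 * ν k) ∧ (∑ j, Δ j k * ν j < 2 * ν k) :=
  strictly_subadditive_labeling_of_eigenvalues_lt_two_general n Γ Δ hΓ0 hΔ0 hcomm hΓeig hΔeig
end

section
/- Let n ≥ 3 and let A be the Coxeter adjacency matrix of the Dynkin diagram D_n. Define v ∈ ℝⁿ by v_1 = v_2 = 1/2 and v_k = cos((k−2)π/(2n−2)) for k = 3,…,n. Then every entry of v is strictly positive and A v = 2cos(π/(2n−2)) · v. -/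
/-!
Put `θ = π / (2n - 2)` and extend `v` to all of `ℕ` by `v k = cos ((k - 1) θ)` for `k ≥ 2`; then
`v n = cos (π / 2) = 0`, so the missing neighbour of the last vertex contributes nothing and every
row of `A` may be read in the infinite diagram `D_∞`. There the eigen-equation is
`cos ((k - 2) θ) + cos (k θ) = 2 cos θ cos ((k - 1) θ)` along the path, and
`1/2 + 1/2 + cos 2θ = 2 cos² θ` at the branch vertex. Positivity holds because every argument
`(k - 1) θ` with `k < n` lies in `[0, π / 2)`.
-/

open Real Finset Matrix

lemma Real.cos_sub_add_cos_add (x y : ℝ) : cos (x - y) + cos (x + y) = 2 * cos y * cos x := by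
  rw [cos_sub, cos_add]; ring

lemma Fin.sum_ite_val_mem_eq_sum {M : Type*} [AddCommMonoid M] {n : ℕ} {s : Finset ℕ}
    (hs : s ⊆ range (n + 1)) {x : ℕ → M} (hx : x n = 0) :
    ∑ j : Fin n, (if (j : ℕ) ∈ s then x j else 0) = ∑ j ∈ s, x j := by
  calc ∑ j : Fin n, (if (j : ℕ) ∈ s then x j else 0)
      = ∑ j ∈ range (n + 1), if j ∈ s then x j else 0 := by
        rw [Fin.sum_univ_eq_sum_range (fun j => if j ∈ s then x j else 0), sum_range_succ, hx,
          ite_self, add_zero]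
    _ = ∑ j ∈ s, x j := by rw [sum_ite_mem, inter_eq_right.mpr hs]

/-- Neighbours of vertex `i` in the infinite Dynkin diagram `D_∞`, vertices `0` and `1` being the
two short legs at the branch vertex `2`. -/
def typeDNeighbors (i : ℕ) : Finset ℕ :=
  if i ≤ 1 then {2} else if i = 2 then {0, 1, 3} else {i - 1, i + 1}

lemma mem_typeDNeighbors_iff {i j : ℕ} : j ∈ typeDNeighbors i ↔
    (i ≤ 1 ∧ j = 2) ∨ (i = 2 ∧ j ≤ 1) ∨ (2 ≤ i ∧ i + 1 = j) ∨ (2 ≤ j ∧ j + 1 = i) := by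
  unfold typeDNeighbors
  split_ifs <;> simp <;> omega

lemma typeDNeighbors_subset_range {n i : ℕ} (hn : 3 ≤ n) (hi : i < n) :
    typeDNeighbors i ⊆ range (n + 1) := by
  intro j hj
  rw [mem_typeDNeighbors_iff] at hj
  rw [mem_range]
  omega

noncomputable def typeDVector (θ : ℝ) (k : ℕ) : ℝ :=
  if k ≤ 1 then 1 / 2 else cos (((k : ℝ) - 1) * θ)

lemma sum_typeDNeighbors_typeDVector (θ : ℝ) (i : ℕ) :
    ∑ j ∈ typeDNeighbors i, typeDVector θ j = 2 * cos θ * typeDVector θ i := by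
  unfold typeDNeighbors
  split_ifs with h_leg h_branch
  · rw [sum_singleton]
    norm_num [typeDVector, h_leg]
    ring
  · subst h_branch
    have h_double : 1 + cos (2 * θ) = 2 * cos θ * cos θ := by rw [cos_two_mul]; ring
    norm_num [typeDVector]
    linarith
  · rw [sum_pair (by omega)]
    simp only [typeDVector, if_neg (by omega : ¬i - 1 ≤ 1), if_neg (by omega : ¬i + 1 ≤ 1), h_leg,
      if_false]
    push_cast [Nat.cast_sub (by omega : 1 ≤ i)]
    convert cos_sub_add_cos_add (((i : ℝ) - 1) * θ) θ using 2 <;> ring_nf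

lemma typeDVector_pos {θ : ℝ} (hθ : 0 ≤ θ) {k : ℕ} (hk : ((k : ℝ) - 1) * θ < π / 2) :
    0 < typeDVector θ k := by
  unfold typeDVector
  split_ifs with hk1
  · norm_num
  · have hk1' : (1 : ℝ) ≤ k := by exact_mod_cast (by omega : 1 ≤ k)
    have : 0 ≤ ((k : ℝ) - 1) * θ := mul_nonneg (sub_nonneg.mpr hk1') hθ
    exact cos_pos_of_mem_Ioo ⟨by linarith [pi_pos], hk⟩

lemma sub_one_mul_pi_div {n : ℝ} (hn : 1 < n) : (n - 1) * (π / (2 * n - 2)) = π / 2 := by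
  have : n - 1 ≠ 0 := by linarith
  rw [show 2 * n - 2 = 2 * (n - 1) by ring]
  field_simp

lemma mulVec_apply_eq_sum_typeDNeighbors {n : ℕ} (hn : 3 ≤ n) {A : Matrix (Fin n) (Fin n) ℝ}
    (hA : ∀ i j : Fin n, A i j = if (j : ℕ) ∈ typeDNeighbors i then 1 else 0)
    {x : ℕ → ℝ} (hx : x n = 0) (i : Fin n) :
    (A *ᵥ fun j => x j) i = ∑ j ∈ typeDNeighbors i, x j := by
  simp only [mulVec, dotProduct, hA, ite_mul, one_mul, zero_mul]
  exact Fin.sum_ite_val_mem_eq_sum (typeDNeighbors_subset_range hn i.isLt) hx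

/-- The Coxeter adjacency matrix of `D_n` (0-indexed: vertices `0` and `1`
each joined to vertex `2`, and vertices `2, 3, …, n-1` forming a path; 1-indexed this is
vertices `1, 2` joined to `3` and path `3 − 4 − ⋯ − n`) has dominant eigenvector `v` with
`v 0 = v 1 = 1/2` and `v k = cos((k−1)π/(2n−2))` for `k ≥ 2` (1-indexed:
`v_k = cos((k−2)π/(2n−2))` for `k ≥ 3`), all entries strictly positive, and eigenvalue
`2 cos(π/(2n−2))`. -/
theorem typeD_dominant_eigenvector
    (n : ℕ) (hn : 3 ≤ n)
    (A : Matrix (Fin n) (Fin n) ℝ)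
    (hA : ∀ i j : Fin n, A i j =
      if ((i : ℕ) = 0 ∧ (j : ℕ) = 2) ∨ ((i : ℕ) = 2 ∧ (j : ℕ) = 0) ∨
         ((i : ℕ) = 1 ∧ (j : ℕ) = 2) ∨ ((i : ℕ) = 2 ∧ (j : ℕ) = 1) then 1
      else if (2 ≤ (i : ℕ) ∧ (i : ℕ) + 1 = (j : ℕ)) ∨
              (2 ≤ (j : ℕ) ∧ (j : ℕ) + 1 = (i : ℕ)) then 1 else 0)
    (v : Fin n → ℝ)
    (hv01 : ∀ k : Fin n, (k : ℕ) = 0 ∨ (k : ℕ) = 1 → v k = 1 / 2)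
    (hv : ∀ k : Fin n, 2 ≤ (k : ℕ) →
      v k = Real.cos ((((k : ℕ) : ℝ) - 1) * Real.pi / (2 * (n : ℝ) - 2))) :
    (∀ k, 0 < v k) ∧ A.mulVec v = (2 * Real.cos (Real.pi / (2 * (n : ℝ) - 2))) • v := by
  set θ := π / (2 * (n : ℝ) - 2)
  have hn' : (3 : ℝ) ≤ n := by exact_mod_cast hn
  have hθ_pos : 0 < θ := div_pos pi_pos (by linarith)
  have hθ : ((n : ℝ) - 1) * θ = π / 2 := sub_one_mul_pi_div (by linarith)
  have hA' : ∀ i j : Fin n, A i j = if (j : ℕ) ∈ typeDNeighbors i then 1 else 0 := by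
    intro i j
    simp only [hA, mem_typeDNeighbors_iff]
    split_ifs <;> first | rfl | omega
  obtain rfl : v = fun k : Fin n => typeDVector θ k := by
    funext k
    by_cases hk : (k : ℕ) ≤ 1
    · rw [hv01 k (by omega), typeDVector, if_pos hk]
    · rw [hv k (by omega), typeDVector, if_neg hk, mul_div_assoc]
  have h_last : typeDVector θ n = 0 := by
    rw [typeDVector, if_neg (by omega), hθ, cos_pi_div_two]
  refine ⟨fun k => typeDVector_pos hθ_pos.le ?_, funext fun i => ?_⟩
  · rw [← hθ]
    gcongr
    exact k.isLt
  · rw [mulVec_apply_eq_sum_typeDNeighbors hn hA' h_last, sum_typeDNeighbors_typeDVector]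
    rfl
end

section
/- Let (n, h) be one of (6, 12), (7, 18), (8, 30), let A be the Coxeter adjacency matrix of the Dynkin diagram E_n, and set θ = π/h. Define v ∈ ℝⁿ by v_1 = sin θ / sin 3θ, v_2 = sin θ / sin 2θ, v_3 = sin 2θ / sin 3θ, v_4 = 1, and v_k = sin((n+1−k)θ) / sin((n−3)θ) for k = 5,…,n. Then every entry of v is strictly positive and A v = 2cos(π/h) · v. -/
/-!
Along the tail of `E_n` the entries are `sin ((n - k) θ)`, up to scaling, and the identity
`sin ((a - 1) θ) + sin ((a + 1) θ) = 2 cos θ sin (a θ)` gives the eigenvalue equation at every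
vertex except the branch vertex. There, after clearing denominators and applying product-to-sum
formulas, the equation becomes `sin 3θ · sin ((n - 3) θ) = sin 2θ · sin (n θ)`, which is the one
place where `θ = π / h` matters: it is checked by hand for the three pairs `(n, h)`, and for `E_8`
it is the golden-ratio identity `cos (π / 5) - cos (2π / 5) = 1 / 2`. Positivity holds because all
the angles involved lie in `(0, π)`.
-/

open Real Finset Matrix

def TypeEAdj (i j : ℕ) : Prop :=
  (i = 0 ∧ j = 2 ∨ i = 2 ∧ j = 0 ∨ i = 1 ∧ j = 3 ∨ i = 3 ∧ j = 1 ∨ i = 2 ∧ j = 3 ∨ i = 3 ∧ j = 2) ∨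
    (3 ≤ i ∧ i + 1 = j ∨ 3 ≤ j ∧ j + 1 = i)

instance : DecidableRel TypeEAdj := fun _ _ => by unfold TypeEAdj; infer_instance

def typeEMatrix (n : ℕ) : Matrix (Fin n) (Fin n) ℝ :=
  Matrix.of fun i j => if TypeEAdj i j then 1 else 0

/-- Summing up to `n` inclusive, with `w n = 0`, lets the last vertex of the tail be treated like
the interior ones. -/
theorem typeEMatrix_mulVec_apply {n : ℕ} (w : ℕ → ℝ) (hw : w n = 0) (i : Fin n) :
    (typeEMatrix n *ᵥ fun j => w j) i = ∑ j ∈ (range (n + 1)).filter (TypeEAdj i), w j := by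
  simp only [Matrix.mulVec, dotProduct, typeEMatrix, Matrix.of_apply, ite_mul, one_mul, zero_mul]
  rw [Fin.sum_univ_eq_sum_range (fun j => if TypeEAdj i j then w j else 0), sum_filter,
    sum_range_succ, hw, ite_self, add_zero]

theorem typeEMatrix_mulVec_eq_smul {n : ℕ} (hn : 4 ≤ n) (w : ℕ → ℝ) (μ : ℝ) (hw : w n = 0)
    (h0 : w 2 = μ * w 0) (h1 : w 3 = μ * w 1) (h2 : w 0 + w 3 = μ * w 2)
    (h3 : w 1 + w 2 + w 4 = μ * w 3)
    (htail : ∀ k, 3 ≤ k → k + 2 ≤ n → w k + w (k + 2) = μ * w (k + 1)) :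
    typeEMatrix n *ᵥ (fun j : Fin n => w j) = μ • fun j : Fin n => w j := by
  ext ⟨i, hi⟩
  rw [typeEMatrix_mulVec_apply w hw, Pi.smul_apply, smul_eq_mul]
  obtain rfl | rfl | rfl | rfl | hi4 : i = 0 ∨ i = 1 ∨ i = 2 ∨ i = 3 ∨ 4 ≤ i := by omega
  · rw [show (range (n + 1)).filter (TypeEAdj 0) = {2} by ext j; simp [TypeEAdj]; omega,
      sum_singleton, h0]
  · rw [show (range (n + 1)).filter (TypeEAdj 1) = {3} by ext j; simp [TypeEAdj]; omega,
      sum_singleton, h1]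
  · rw [show (range (n + 1)).filter (TypeEAdj 2) = {0, 3} by ext j; simp [TypeEAdj]; omega,
      sum_pair (by norm_num), h2]
  · rw [show (range (n + 1)).filter (TypeEAdj 3) = {1, 2, 4} by ext j; simp [TypeEAdj]; omega,
      sum_insert (by simp), sum_pair (by norm_num), ← add_assoc, h3]
  · obtain ⟨k, rfl⟩ := Nat.exists_eq_add_of_le' hi4
    rw [show (range (n + 1)).filter (TypeEAdj (k + 4)) = {k + 3, k + 5} by
        ext j; simp [TypeEAdj]; omega,
      sum_pair (by omega), htail (k + 3) (by omega) (by omega)]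

theorem sin_sub_add_sin_add (a x : ℝ) : sin (a - x) + sin (a + x) = 2 * cos x * sin a := by
  rw [← two_mul_sin_mul_cos]; ring

theorem sin_add_mul_sin_sub_sin_mul_sin_sub (a b x : ℝ) :
    sin (a + x) * sin b - sin a * sin (b - x) = sin x * sin (a + b) := by
  rw [sin_add, sin_sub, sin_add]; ring

/-- The tail formula is used for every `k ≥ 3`, so the vector vanishes at the virtual vertex
`k = n`. -/
noncomputable def typeEVector (n : ℕ) (θ : ℝ) : ℕ → ℝ
  | 0 => sin θ / sin (3 * θ)
  | 1 => sin θ / sin (2 * θ)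
  | 2 => sin (2 * θ) / sin (3 * θ)
  | k + 3 => sin ((n - (k + 3 : ℕ)) * θ) / sin ((n - 3) * θ)

section typeEVector

variable {n : ℕ} {θ : ℝ}

theorem typeEVector_three_eq_one (h : sin ((n - 3) * θ) ≠ 0) : typeEVector n θ 3 = 1 := by
  simpa [typeEVector] using div_self h

theorem typeEVector_self (hn : 3 ≤ n) : typeEVector n θ n = 0 := by
  obtain ⟨k, rfl⟩ := Nat.exists_eq_add_of_le' hn
  simp [typeEVector]

theorem typeEVector_pos (hθ : 0 < θ) (h3 : 3 * θ < π) (hn : (n - 3) * θ < π) {k : ℕ}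
    (hk : k < n) : 0 < typeEVector n θ k := by
  have hsin : ∀ x, 0 < x → x ≤ 3 * θ → 0 < sin x := fun x hx hx3 =>
    sin_pos_of_pos_of_lt_pi hx (by linarith)
  match k with
  | 0 => exact div_pos (hsin _ hθ (by linarith)) (hsin _ (by linarith) le_rfl)
  | 1 => exact div_pos (hsin _ hθ (by linarith)) (hsin _ (by linarith) (by linarith))
  | 2 => exact div_pos (hsin _ (by linarith) (by linarith)) (hsin _ (by linarith) le_rfl)
  | k + 3 =>
    have hkn : ((k + 3 : ℕ) : ℝ) < n := by exact_mod_cast hk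
    push_cast at hkn
    refine div_pos (sin_pos_of_pos_of_lt_pi ?_ ?_) (sin_pos_of_pos_of_lt_pi ?_ hn)
    · exact mul_pos (by push_cast; linarith) hθ
    · push_cast; nlinarith
    · exact mul_pos (by linarith) hθ

theorem typeEVector_two_eq_mul_zero : typeEVector n θ 2 = 2 * cos θ * typeEVector n θ 0 := by
  simp only [typeEVector, sin_two_mul]; ring

theorem typeEVector_three_eq_mul_one (h2 : sin (2 * θ) ≠ 0) (hn3 : sin ((n - 3) * θ) ≠ 0) :
    typeEVector n θ 3 = 2 * cos θ * typeEVector n θ 1 := by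
  rw [typeEVector_three_eq_one hn3]
  simp only [typeEVector]
  rw [mul_div_assoc', eq_div_iff h2, sin_two_mul]; ring

theorem typeEVector_zero_add_three (h3 : sin (3 * θ) ≠ 0) (hn3 : sin ((n - 3) * θ) ≠ 0) :
    typeEVector n θ 0 + typeEVector n θ 3 = 2 * cos θ * typeEVector n θ 2 := by
  rw [typeEVector_three_eq_one hn3]
  simp only [typeEVector]
  rw [div_add_one h3, mul_div_assoc', ← sin_sub_add_sin_add]; ring_nf

theorem typeEVector_one_add_two_add_four (h2 : sin (2 * θ) ≠ 0) (h3 : sin (3 * θ) ≠ 0)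
    (hn3 : sin ((n - 3) * θ) ≠ 0)
    (hbranch : sin (3 * θ) * sin ((n - 3) * θ) = sin (2 * θ) * sin (n * θ)) :
    typeEVector n θ 1 + typeEVector n θ 2 + typeEVector n θ 4 = 2 * cos θ * typeEVector n θ 3 := by
  have h24 : sin (2 * θ) + sin (4 * θ) = 2 * cos θ * sin (3 * θ) := by
    rw [← sin_sub_add_sin_add]; ring_nf
  have h43 : sin (4 * θ) * sin ((n - 3) * θ) - sin (3 * θ) * sin ((n - 4) * θ)
      = sin θ * sin (n * θ) := by
    convert sin_add_mul_sin_sub_sin_mul_sin_sub (3 * θ) ((n - 3) * θ) θ using 3 <;> ring_nf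
  rw [typeEVector_three_eq_one hn3]
  simp only [typeEVector]
  push_cast
  rw [div_add_div _ _ h2 h3, div_add_div _ _ (mul_ne_zero h2 h3) hn3, div_eq_iff (by simp [*])]
  linear_combination
    sin θ * hbranch + sin (2 * θ) * sin ((n - 3) * θ) * h24 - sin (2 * θ) * h43

theorem typeEVector_add_add_two {k : ℕ} (hk : 3 ≤ k) :
    typeEVector n θ k + typeEVector n θ (k + 2) = 2 * cos θ * typeEVector n θ (k + 1) := by
  obtain ⟨k, rfl⟩ := Nat.exists_eq_add_of_le' hk
  simp only [typeEVector, ← add_div, mul_div_assoc']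
  rw [← sin_sub_add_sin_add]
  push_cast
  ring_nf

theorem typeEMatrix_mulVec_typeEVector (hn : 4 ≤ n) (h2 : sin (2 * θ) ≠ 0)
    (h3 : sin (3 * θ) ≠ 0) (hn3 : sin ((n - 3) * θ) ≠ 0)
    (hbranch : sin (3 * θ) * sin ((n - 3) * θ) = sin (2 * θ) * sin (n * θ)) :
    typeEMatrix n *ᵥ (fun j : Fin n => typeEVector n θ j)
      = (2 * cos θ) • fun j : Fin n => typeEVector n θ j :=
  typeEMatrix_mulVec_eq_smul hn _ _ (typeEVector_self (by omega)) typeEVector_two_eq_mul_zero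
    (typeEVector_three_eq_mul_one h2 hn3) (typeEVector_zero_add_three h3 hn3)
    (typeEVector_one_add_two_add_four h2 h3 hn3 hbranch) fun _ hk _ => typeEVector_add_add_two hk

theorem eq_typeEVector (hn3 : sin ((n - 3) * θ) ≠ 0) (v : Fin n → ℝ)
    (hv0 : ∀ k : Fin n, (k : ℕ) = 0 → v k = sin θ / sin (3 * θ))
    (hv1 : ∀ k : Fin n, (k : ℕ) = 1 → v k = sin θ / sin (2 * θ))
    (hv2 : ∀ k : Fin n, (k : ℕ) = 2 → v k = sin (2 * θ) / sin (3 * θ))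
    (hv3 : ∀ k : Fin n, (k : ℕ) = 3 → v k = 1)
    (hv4 : ∀ k : Fin n, 4 ≤ (k : ℕ) → v k = sin ((n - (k : ℕ)) * θ) / sin ((n - 3) * θ)) :
    v = fun k : Fin n => typeEVector n θ k := by
  funext ⟨k, hk⟩
  obtain rfl | rfl | rfl | rfl | h4 : k = 0 ∨ k = 1 ∨ k = 2 ∨ k = 3 ∨ 4 ≤ k := by omega
  · exact hv0 _ rfl
  · exact hv1 _ rfl
  · exact hv2 _ rfl
  · exact (hv3 _ rfl).trans (typeEVector_three_eq_one hn3).symm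
  · obtain ⟨m, rfl⟩ := Nat.exists_eq_add_of_le' h4
    exact hv4 _ h4

end typeEVector

theorem branch_identity_E6 :
    sin (3 * (π / 12)) * sin ((6 - 3) * (π / 12)) = sin (2 * (π / 12)) * sin (6 * (π / 12)) := by
  rw [show 3 * (π / 12) = π / 4 by ring, show (6 - 3) * (π / 12) = π / 4 by ring,
    show 2 * (π / 12) = π / 6 by ring, show 6 * (π / 12) = π / 2 by ring,
    sin_pi_div_four, sin_pi_div_six, sin_pi_div_two]
  ring_nf
  norm_num

theorem branch_identity_E7 :
    sin (3 * (π / 18)) * sin ((7 - 3) * (π / 18)) = sin (2 * (π / 18)) * sin (7 * (π / 18)) := by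
  rw [show 3 * (π / 18) = π / 6 by ring, show (7 - 3) * (π / 18) = 2 * (2 * (π / 18)) by ring,
    show 7 * (π / 18) = π / 2 - 2 * (π / 18) by ring, sin_pi_div_six, sin_two_mul (2 * _),
    sin_pi_div_two_sub]
  ring

theorem cos_pi_div_five_sub_cos_two_mul_pi_div_five :
    cos (π / 5) - cos (2 * (π / 5)) = 1 / 2 := by
  rw [cos_two_mul, cos_pi_div_five]
  ring_nf
  norm_num

theorem branch_identity_E8 :
    sin (3 * (π / 30)) * sin ((8 - 3) * (π / 30)) = sin (2 * (π / 30)) * sin (8 * (π / 30)) := by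
  have h := two_mul_sin_mul_sin (2 * (π / 30)) (8 * (π / 30))
  rw [show 2 * (π / 30) - 8 * (π / 30) = -(π / 5) by ring,
    show 2 * (π / 30) + 8 * (π / 30) = π / 3 by ring, cos_neg, cos_pi_div_three] at h
  rw [show 3 * (π / 30) = π / 2 - 2 * (π / 5) by ring, show (8 - 3) * (π / 30) = π / 6 by ring,
    sin_pi_div_two_sub, sin_pi_div_six]
  linarith [cos_pi_div_five_sub_cos_two_mul_pi_div_five]

theorem mul_pi_div_lt_pi {k h : ℝ} (hh : 0 < h) (hk : k < h) : k * (π / h) < π := by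
  rw [mul_div_assoc', div_lt_iff₀ hh]
  nlinarith [pi_pos]

/-- For `(n, h) ∈ {(6,12), (7,18), (8,30)}`, the Coxeter adjacency matrix
of `E_n` (0-indexed: vertex `1` joined to vertex `3`, remaining vertices forming the path
`0 − 2 − 3 − 4 − ⋯ − (n-1)`; 1-indexed: vertex `2` joined to `4`, path
`1 − 3 − 4 − 5 − ⋯ − n`) has dominant eigenvector `v` given (with `θ = π/h`) by
`v 0 = sin θ / sin 3θ`, `v 1 = sin θ / sin 2θ`, `v 2 = sin 2θ / sin 3θ`, `v 3 = 1`, and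
`v k = sin((n−k)θ)/sin((n−3)θ)` for `k ≥ 4` (1-indexed: `v_k = sin((n+1−k)θ)/sin((n−3)θ)`
for `k ≥ 5`), all entries strictly positive, with eigenvalue `2 cos(π/h)`. -/
theorem typeE_dominant_eigenvector
    (n h : ℕ)
    (hnh : (n = 6 ∧ h = 12) ∨ (n = 7 ∧ h = 18) ∨ (n = 8 ∧ h = 30))
    (A : Matrix (Fin n) (Fin n) ℝ)
    (hA : ∀ i j : Fin n, A i j =
      if ((i : ℕ) = 0 ∧ (j : ℕ) = 2) ∨ ((i : ℕ) = 2 ∧ (j : ℕ) = 0) ∨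
         ((i : ℕ) = 1 ∧ (j : ℕ) = 3) ∨ ((i : ℕ) = 3 ∧ (j : ℕ) = 1) ∨
         ((i : ℕ) = 2 ∧ (j : ℕ) = 3) ∨ ((i : ℕ) = 3 ∧ (j : ℕ) = 2) then 1
      else if (3 ≤ (i : ℕ) ∧ (i : ℕ) + 1 = (j : ℕ)) ∨
              (3 ≤ (j : ℕ) ∧ (j : ℕ) + 1 = (i : ℕ)) then 1 else 0)
    (θ : ℝ) (hθ : θ = Real.pi / (h : ℝ))
    (v : Fin n → ℝ)
    (hv0 : ∀ k : Fin n, (k : ℕ) = 0 → v k = Real.sin θ / Real.sin (3 * θ))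
    (hv1 : ∀ k : Fin n, (k : ℕ) = 1 → v k = Real.sin θ / Real.sin (2 * θ))
    (hv2 : ∀ k : Fin n, (k : ℕ) = 2 → v k = Real.sin (2 * θ) / Real.sin (3 * θ))
    (hv3 : ∀ k : Fin n, (k : ℕ) = 3 → v k = 1)
    (hv4 : ∀ k : Fin n, 4 ≤ (k : ℕ) →
      v k = Real.sin (((n : ℝ) - ((k : ℕ) : ℝ)) * θ) / Real.sin (((n : ℝ) - 3) * θ)) :
    (∀ k, 0 < v k) ∧ A.mulVec v = (2 * Real.cos (Real.pi / (h : ℝ))) • v := by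
  have hA' : A = typeEMatrix n := by ext i j; rw [hA, ← ite_or]; rfl
  obtain ⟨hn4, hn4', hh3, hnh3, hbranch⟩ : 4 ≤ n ∧ 4 ≤ (n : ℝ) ∧ 3 < (h : ℝ) ∧ (n - 3 : ℝ) < h ∧
      sin (3 * θ) * sin ((n - 3) * θ) = sin (2 * θ) * sin (n * θ) := by
    subst hθ
    rcases hnh with ⟨rfl, rfl⟩ | ⟨rfl, rfl⟩ | ⟨rfl, rfl⟩ <;> push_cast <;>
      refine ⟨by norm_num, by norm_num, by norm_num, by norm_num, ?_⟩
    exacts [branch_identity_E6, branch_identity_E7, branch_identity_E8]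
  have hθ0 : 0 < θ := hθ ▸ div_pos pi_pos (by linarith)
  have h3θ : 3 * θ < π := hθ ▸ mul_pi_div_lt_pi (by linarith) hh3
  have hnθ : (n - 3) * θ < π := hθ ▸ mul_pi_div_lt_pi (by linarith) hnh3
  have hsin : ∀ x, 0 < x → x < π → sin x ≠ 0 := fun x h0 hπ => (sin_pos_of_pos_of_lt_pi h0 hπ).ne'
  have hn3 : sin ((n - 3) * θ) ≠ 0 := hsin _ (mul_pos (by linarith) hθ0) hnθ
  rw [hA', eq_typeEVector hn3 v hv0 hv1 hv2 hv3 hv4, ← hθ]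
  exact ⟨fun k => typeEVector_pos hθ0 h3θ hnθ k.2, typeEMatrix_mulVec_typeEVector hn4
    (hsin _ (by linarith) (by linarith)) (hsin _ (by linarith) h3θ) hn3 hbranch⟩
end

section
/- Let p ≥ 1 and n ≥ 1, and let m be an n×n real matrix with nonnegative entries that is irreducible. If φ_p(m) = 0, then there exists a vector v ∈ ℝⁿ with all entries strictly positive such that (2I − m)v has all entries strictly positive; that is, for every k, Σ_j m_{kj} v_j < 2 v_k. (Equivalently, 2I − m satisfies Vinberg's criterion for a generalized Cartan matrix of finite type.) -/
/-!
Write `B r = φ_r(m)`. The addition formula `φ_{a+b+1} = φ_{a+1} φ_{b+1} - φ_a φ_b` and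
Cassini's identity make `r ↦ B r` periodic of period `2p`, hence bounded. Since
`X φ_{r+1} = φ_{r+2} + φ_r`, the expansion of `m ^ k = m ^ k B 1` in the `B r` has nonnegative
coefficients of total weight at most `2 ^ k`, so the powers of `a = m / 2` are bounded.
As `φ_p(2) = p ≠ 0`, `2` is not in the spectrum of `m`, so `1 - a` has an inverse `H`.
The partial sums `∑_{k<K} a ^ k = H - a ^ K H` are then entrywise nonnegative and bounded,
which forces `a ^ K → 0` and `H = ∑ a ^ k ≥ 0`. Finally `v = H 1` satisfies `v = 1 + a v`,
so `v ≥ 1` and `m v = 2 v - 2 < 2 v`.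
-/

noncomputable def phi : ℕ → Polynomial ℝ
  | 0 => 0
  | 1 => 1
  | (r + 2) => Polynomial.X * phi (r + 1) - phi r

open Polynomial Finset Filter Topology

lemma phi_add_two (r : ℕ) : phi (r + 2) = X * phi (r + 1) - phi r := rfl

lemma phi_eval_two (r : ℕ) : (phi r).eval 2 = r := by
  induction r using Nat.twoStepInduction with
  | zero => simp [phi]
  | one => simp [phi]
  | more r ih₀ ih₁ =>
    rw [phi_add_two, eval_sub, eval_mul, eval_X, ih₀, ih₁]
    push_cast; ring

lemma phi_add (a b : ℕ) : phi (a + b + 1) = phi (a + 1) * phi (b + 1) - phi a * phi b := by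
  induction b using Nat.twoStepInduction with
  | zero => simp [phi]
  | one => rw [phi_add_two]; simp only [phi]; ring
  | more b ih₀ ih₁ =>
    rw [show a + (b + 2) + 1 = (a + b + 1) + 2 by ring, phi_add_two,
      show a + b + 1 + 1 = a + (b + 1) + 1 by ring, ih₁, ih₀,
      show b + 2 + 1 = (b + 1) + 2 from rfl, phi_add_two (b + 1), phi_add_two b]
    ring

lemma phi_add_two_mul_phi (r : ℕ) : phi (r + 2) * phi r = phi (r + 1) ^ 2 - 1 := by
  induction r with
  | zero => simp [phi]
  | succ r ih =>
    rw [phi_add_two (r + 1), phi_add_two r] at *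
    linear_combination ih

lemma notMem_spectrum_of_aeval_eq_zero {𝕜 A : Type*} [Field 𝕜] [Ring A] [Algebra 𝕜 A]
    {a : A} {f : 𝕜[X]} (hf : aeval a f = 0) {c : 𝕜} (hc : f.eval c ≠ 0) :
    c ∉ spectrum 𝕜 a := fun h => by
  have h' := spectrum.subset_polynomial_aeval a f ⟨c, h, rfl⟩
  rw [hf, spectrum.mem_iff, sub_zero] at h'
  exact h' (hc.isUnit.map (algebraMap 𝕜 A))

lemma Function.Periodic.exists_abs_le {f : ℕ → ℝ} {N : ℕ} (hf : Function.Periodic f N)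
    (hN : 0 < N) : ∃ C, ∀ r, |f r| ≤ C :=
  ⟨∑ s ∈ range N, |f s|, fun r => hf.map_mod_nat r ▸
    single_le_sum (fun s _ => abs_nonneg (f s)) (mem_range.2 (Nat.mod_lt r hN))⟩

lemma abs_map_pow_mul_le {R : Type*} [Ring R] (L : R →+ ℝ) {a : R} {B : ℕ → R}
    (h0 : B 0 = 0) (hrec : ∀ r, a * B (r + 1) = B (r + 2) + B r) {C : ℝ}
    (hC : ∀ r, |L (B r)| ≤ C) (k r : ℕ) : |L (a ^ k * B r)| ≤ 2 ^ k * C := by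
  induction k generalizing r with
  | zero => simpa using hC r
  | succ k ih =>
    cases r with
    | zero =>
      rw [h0, mul_zero, map_zero, abs_zero]
      exact mul_nonneg (by positivity) ((abs_nonneg _).trans (hC 0))
    | succ r =>
      rw [pow_succ, mul_assoc, hrec, mul_add, map_add]
      calc |L (a ^ k * B (r + 2)) + L (a ^ k * B r)|
          ≤ |L (a ^ k * B (r + 2))| + |L (a ^ k * B r)| := abs_add_le _ _
        _ ≤ 2 ^ k * C + 2 ^ k * C := add_le_add (ih _) (ih _)
        _ = 2 ^ (k + 1) * C := by ring

section Algebra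

variable {A : Type*} [Ring A] [Algebra ℝ A]

lemma mul_aeval_phi (a : A) (r : ℕ) :
    a * aeval a (phi (r + 1)) = aeval a (phi (r + 2)) + aeval a (phi r) := by
  rw [phi_add_two, map_sub, map_mul, aeval_X]
  abel

lemma periodic_aeval_phi {a : A} {p : ℕ} (hp : aeval a (phi p) = 0) :
    Function.Periodic (fun r => aeval a (phi r)) (2 * p) := by
  obtain _ | q := p
  · simp
  set B := fun r => aeval a (phi r)
  have hshift (r : ℕ) : B (r + (q + 1)) = -(B r * B q) := by
    simpa [B, ← add_assoc, hp] using congrArg (aeval a) (phi_add r q)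
  -- Cassini's identity at `q`, with `B (q + 2) = -B q`, says that `B q` is an involution.
  have hsq : B q * B q = 1 := by
    have h := congrArg (aeval a) (phi_add_two_mul_phi q)
    have h2 : B (q + 2) = -B q := by
      simpa [B, phi, add_comm 1] using hshift 1
    simp only [map_mul, map_sub, map_pow, map_one] at h
    rw [show aeval a (phi (q + 1)) = 0 from hp] at h
    simpa [B, h2] using h
  intro r
  show B (r + 2 * (q + 1)) = B r
  rw [two_mul, ← add_assoc, hshift, hshift, neg_mul, neg_neg, mul_assoc, hsq, mul_one]

lemma exists_abs_map_pow_le_of_aeval_phi_eq_zero {a : A} {p : ℕ} (hp : 1 ≤ p)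
    (hphi : aeval a (phi p) = 0) (L : A →+ ℝ) :
    ∃ C, ∀ k, |L (a ^ k)| ≤ 2 ^ k * C := by
  obtain ⟨C, hC⟩ := ((periodic_aeval_phi hphi).comp L).exists_abs_le (by omega)
  refine ⟨C, fun k => ?_⟩
  simpa [phi] using abs_map_pow_mul_le L (B := fun r => aeval a (phi r)) (by simp [phi])
    (mul_aeval_phi a) hC k 1

end Algebra

namespace Matrix

variable {ι : Type*} [Fintype ι] [DecidableEq ι]

lemma nonneg_of_one_sub_mul_eq_one {a H : Matrix ι ι ℝ} (ha : ∀ i j, 0 ≤ a i j)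
    (hbdd : ∀ i j, BddAbove (Set.range fun k => (a ^ k) i j)) (hH : (1 - a) * H = 1)
    (i j : ι) : 0 ≤ H i j := by
  have hpartial (K : ℕ) : ∑ k ∈ range K, a ^ k = H - a ^ K * H := by
    simpa [sub_mul, mul_assoc, hH] using congrArg (· * H) (geom_sum_mul_neg a K)
  choose C hC using hbdd
  have hpow (i j : ι) : Tendsto (fun k => (a ^ k) i j) atTop (𝓝 0) := by
    refine (summable_of_sum_range_le (c := H i j + ∑ s, C i s * |H s j|)
      (fun k => pow_apply_nonneg ha k i j) fun K => ?_).tendsto_atTop_zero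
    rw [← sum_apply, hpartial, sub_apply, mul_apply, sub_eq_add_neg, ← sum_neg_distrib]
    gcongr with s
    calc -((a ^ K) i s * H s j) ≤ (a ^ K) i s * |H s j| := by
          rw [← mul_neg]
          exact mul_le_mul_of_nonneg_left (neg_le_abs _) (pow_apply_nonneg ha K i s)
      _ ≤ C i s * |H s j| := by gcongr; exact hC i s ⟨K, rfl⟩
  have hlim : Tendsto (fun K => (a ^ K * H) i j) atTop (𝓝 0) := by
    simpa [mul_apply] using tendsto_finsetSum univ fun s _ => (hpow i s).mul_const (H s j)
  refine le_of_tendsto' hlim fun K => ?_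
  have h := congrFun (congrFun (hpartial K) i) j
  rw [sum_apply, sub_apply] at h
  linarith [sum_nonneg fun k (_ : k ∈ range K) => pow_apply_nonneg ha k i j]

lemma exists_pos_mulVec_lt_self {a H : Matrix ι ι ℝ} (ha : ∀ i j, 0 ≤ a i j)
    (hbdd : ∀ i j, BddAbove (Set.range fun k => (a ^ k) i j)) (hH : (1 - a) * H = 1) :
    ∃ v : ι → ℝ, (∀ i, 0 < v i) ∧ ∀ i, (a *ᵥ v) i < v i := by
  set v := H *ᵥ 1
  have hv (i : ι) : v i = 1 + (a *ᵥ v) i := by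
    have h : (1 - a) *ᵥ v = 1 := by rw [mulVec_mulVec, hH, one_mulVec]
    rw [sub_mulVec, one_mulVec] at h
    have hi := congrFun h i
    rw [Pi.sub_apply, Pi.one_apply] at hi
    linarith
  have hav (i : ι) : 0 ≤ (a *ᵥ v) i :=
    sum_nonneg fun j _ => mul_nonneg (ha i j) <| sum_nonneg fun l _ =>
      mul_nonneg (nonneg_of_one_sub_mul_eq_one ha hbdd hH j l) zero_le_one
  exact ⟨v, fun i => by linarith [hv i, hav i], fun i => by linarith [hv i]⟩

end Matrix

theorem vinberg_of_phi_annihilates_general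
    (p n : ℕ) (hp : 1 ≤ p)
    (m : Matrix (Fin n) (Fin n) ℝ)
    (hm0 : ∀ i j, 0 ≤ m i j)
    (hphi : Polynomial.aeval m (phi p) = 0) :
    ∃ v : Fin n → ℝ, (∀ k, 0 < v k) ∧ ∀ k, ∑ j, m k j * v j < 2 * v k := by
  set a := (2 : ℝ)⁻¹ • m
  have hunit := spectrum.notMem_iff.1 <|
    notMem_spectrum_of_aeval_eq_zero hphi (c := 2) (by rw [phi_eval_two]; positivity)
  obtain ⟨G, hG⟩ := hunit.exists_right_inv
  have hH : (1 - a) * ((2 : ℝ) • G) = 1 := by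
    calc (1 - a) * ((2 : ℝ) • G) = (algebraMap ℝ _ 2 - m) * G := by
          rw [Algebra.algebraMap_eq_smul_one]
          simp only [a, sub_mul, one_mul, smul_mul_assoc, mul_smul_comm]
          module
      _ = 1 := hG
  have hbdd (i j : Fin n) : BddAbove (Set.range fun k => (a ^ k) i j) := by
    obtain ⟨C, hC⟩ :=
      exists_abs_map_pow_le_of_aeval_phi_eq_zero hp hphi (Matrix.entryAddMonoidHom ℝ i j)
    refine ⟨C, Set.forall_mem_range.2 fun k => ?_⟩
    rw [_root_.smul_pow, Matrix.smul_apply, smul_eq_mul, inv_pow]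
    calc (2 ^ k)⁻¹ * (m ^ k) i j ≤ (2 ^ k)⁻¹ * (2 ^ k * C) := by
          gcongr; exact (le_abs_self _).trans (hC k)
      _ = C := by field_simp
  obtain ⟨v, hv0, hvlt⟩ := Matrix.exists_pos_mulVec_lt_self
    (fun i j => mul_nonneg (by norm_num) (hm0 i j)) hbdd hH
  refine ⟨v, hv0, fun k => ?_⟩
  have h := hvlt k
  simp only [Matrix.mulVec, dotProduct, mul_assoc, ← mul_sum] at h
  linarith

/-- If `m` is an irreducible nonnegative `n × n` real matrix with
`φ_p(m) = 0`, then there is a strictly positive vector `v` with `(2I − m)v` strictly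
positive, i.e. `∑ j, m k j * v j < 2 * v k` for all `k` (Vinberg's criterion for
`2I − m`). -/
theorem vinberg_of_phi_annihilates
    (p n : ℕ) (hp : 1 ≤ p) (hn : 1 ≤ n)
    (m : Matrix (Fin n) (Fin n) ℝ)
    (hm0 : ∀ i j, 0 ≤ m i j)
    (hirr : ∀ i j, ∃ r : ℕ, 1 ≤ r ∧ 0 < (m ^ r) i j)
    (hphi : Polynomial.aeval m (phi p) = 0) :
    ∃ v : Fin n → ℝ, (∀ k, 0 < v k) ∧ ∀ k, ∑ j, m k j * v j < 2 * v k :=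
  vinberg_of_phi_annihilates_general p n hp m hm0 hphi
end

section
/- Let p ≥ 1 and h ≥ 2 be integers with h dividing p, and let m be an n×n real matrix such that m = P D P⁻¹ for some invertible n×n matrix P and some diagonal matrix D, each of whose diagonal entries equals 2cos(kπ/h) for some integer k with 1 ≤ k ≤ h − 1. Then φ_p(m) = 0. (In particular, the Coxeter adjacency matrix of a Dynkin diagram of finite type, whose eigenvalues are 2cos(e_jπ/h) with h its Coxeter number and which is diagonalizable, is annihilated by φ_p whenever h divides p.) -/
open Polynomial Real

theorem phi_eq_S : ∀ r : ℕ, phi r = Chebyshev.S ℝ ((r : ℤ) - 1)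
  | 0 => by simp [phi]
  | 1 => by simp [phi]
  | r + 2 => by
    rw [phi, phi_eq_S (r + 1), phi_eq_S r]
    push_cast
    rw [show (r : ℤ) + 2 - 1 = (r - 1) + 2 by ring, Chebyshev.S_add_two]
    ring_nf

theorem phi_eval_two_mul_cos_mul_sin (r : ℕ) (θ : ℝ) :
    (phi r).eval (2 * cos θ) * sin θ = sin (r * θ) := by
  rw [phi_eq_S, Chebyshev.S_two_mul_real_cos]
  push_cast
  ring_nf

theorem phi_isRoot_two_mul_cos_pi_div {p h k : ℕ} (hk : 0 < k) (hkh : k < h) (hdvd : h ∣ p) :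
    (phi p).IsRoot (2 * cos (k * π / h)) := by
  have hh : (0 : ℝ) < h := by exact_mod_cast hk.trans hkh
  have hsin : sin (k * π / h) ≠ 0 := by
    refine (sin_pos_of_pos_of_lt_pi (by positivity) ?_).ne'
    rw [div_lt_iff₀ hh, mul_comm]
    gcongr
  obtain ⟨c, rfl⟩ := hdvd
  have hsin_p : sin (((h * c : ℕ) : ℝ) * (k * π / h)) = 0 := by
    rw [show ((h * c : ℕ) : ℝ) * (k * π / h) = (c * k : ℕ) * π by
      push_cast; field_simp]
    exact sin_nat_mul_pi _
  rw [← phi_eval_two_mul_cos_mul_sin] at hsin_p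
  exact (mul_eq_zero.mp hsin_p).resolve_right hsin

theorem aeval_units_conj {R A : Type*} [CommSemiring R] [Ring A] [Algebra R A]
    (u : Aˣ) (a : A) (q : R[X]) : aeval (u * a * ↑u⁻¹ : A) q = u * aeval a q * ↑u⁻¹ := by
  simpa [ConjAct.units_smul_def] using
    aeval_algHom_apply (MulSemiringAction.toAlgEquiv R A (ConjAct.toConjAct u)).toAlgHom a q

theorem Matrix.aeval_diagonal {ι R : Type*} [Fintype ι] [DecidableEq ι] [CommRing R]
    (d : ι → R) (q : R[X]) : aeval (Matrix.diagonal d) q = Matrix.diagonal fun i ↦ q.eval (d i) := by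
  rw [← Matrix.diagonalAlgHom_apply (R := R), aeval_algHom_apply, Matrix.diagonalAlgHom_apply]
  congr 1
  ext i
  simp [aeval_fn_apply]

theorem Matrix.aeval_conj_diagonal_eq_zero {ι R : Type*} [Fintype ι] [DecidableEq ι] [CommRing R]
    (P : Matrix ι ι R) (hP : IsUnit P.det) (d : ι → R) {q : R[X]} (hq : ∀ i, q.IsRoot (d i)) :
    aeval (P * Matrix.diagonal d * P⁻¹) q = 0 := by
  have h : aeval (P * Matrix.diagonal d * P⁻¹) q = P * aeval (Matrix.diagonal d) q * P⁻¹ :=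
    aeval_units_conj (P.nonsingInvUnit hP) _ _
  rw [h, Matrix.aeval_diagonal, show (fun i ↦ q.eval (d i)) = 0 from funext hq]
  simp

theorem phi_annihilates_diagonalizable_with_cos_eigenvalues_general
    (p h n : ℕ) (hdvd : h ∣ p)
    (m P : Matrix (Fin n) (Fin n) ℝ) (hP : IsUnit P.det)
    (d : Fin n → ℝ)
    (hd : ∀ i, ∃ k : ℕ, 1 ≤ k ∧ k ≤ h - 1 ∧
      d i = 2 * Real.cos ((k : ℝ) * Real.pi / (h : ℝ)))
    (hm : m = P * Matrix.diagonal d * P⁻¹) :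
    Polynomial.aeval m (phi p) = 0 := by
  rw [hm]
  refine Matrix.aeval_conj_diagonal_eq_zero P hP d fun i ↦ ?_
  obtain ⟨k, hk, hkh, hdi⟩ := hd i
  rw [hdi]
  exact phi_isRoot_two_mul_cos_pi_div hk (by omega) hdvd

/-- If `h ∣ p` with `p ≥ 1`, `h ≥ 2`, and `m = P D P⁻¹` is diagonalizable
with each diagonal entry of `D` of the form `2 cos(kπ/h)` for some `1 ≤ k ≤ h − 1`, then
`φ_p(m) = 0`. -/
theorem phi_annihilates_diagonalizable_with_cos_eigenvalues
    (p h n : ℕ) (hp : 1 ≤ p) (hh : 2 ≤ h) (hdvd : h ∣ p)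
    (m P : Matrix (Fin n) (Fin n) ℝ) (hP : IsUnit P.det)
    (d : Fin n → ℝ)
    (hd : ∀ i, ∃ k : ℕ, 1 ≤ k ∧ k ≤ h - 1 ∧
      d i = 2 * Real.cos ((k : ℝ) * Real.pi / (h : ℝ)))
    (hm : m = P * Matrix.diagonal d * P⁻¹) :
    Polynomial.aeval m (phi p) = 0 :=
  phi_annihilates_diagonalizable_with_cos_eigenvalues_general p h n hdvd m P hP d hd hm
end
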